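/- arXiv:2307.04079 — 4 statements merged into one kernel-verified Lean document; each statement's English description precedes it below -/
import Mathlib

section
/- In a projective rectangle, any two lines that intersect in a point are coplanar, i.e., lie in a common full projective subplane (with special lines intersected with the plane). -/
/-- A projective rectangle: an incidence structure satisfying axioms (A1)-(A6). -/
structure ProjRect (Point Line : Type) where
  Incid : Point → Line → Prop
  /-- (A4) the special point. -/
  D : Point
  /-- (A1) every two distinct points lie on exactly one line. -/
  A1 : ∀ p q : Point, p ≠ q → ∃! l : Line, Incid p l ∧ Incid q l
  /-- (A2) there exist four points with no three collinear. -/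
  A2 : ∃ a b c d : Point, a ≠ b ∧ a ≠ c ∧ a ≠ d ∧ b ≠ c ∧ b ≠ d ∧ c ≠ d ∧
    (∀ l : Line, ¬(Incid a l ∧ Incid b l ∧ Incid c l)) ∧
    (∀ l : Line, ¬(Incid a l ∧ Incid b l ∧ Incid d l)) ∧
    (∀ l : Line, ¬(Incid a l ∧ Incid c l ∧ Incid d l)) ∧
    (∀ l : Line, ¬(Incid b l ∧ Incid c l ∧ Incid d l))
  /-- (A3) every line has at least three points. -/
  A3 : ∀ l : Line, ∃ p q r : Point, p ≠ q ∧ p ≠ r ∧ q ≠ r ∧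
    Incid p l ∧ Incid q l ∧ Incid r l
  /-- (A5) each special line intersects every other line in exactly one point. -/
  A5 : ∀ s l : Line, Incid D s → l ≠ s → ∃! p : Point, Incid p s ∧ Incid p l
  /-- (A6) restricted Pasch axiom. -/
  A6 : ∀ l1 l2 l3 l4 : Line, ∀ p p13 p14 p23 p24 : Point,
    ¬Incid D l1 → ¬Incid D l2 → l1 ≠ l2 → Incid p l1 → Incid p l2 → l3 ≠ l4 →
    Incid p13 l1 → Incid p13 l3 → Incid p14 l1 → Incid p14 l4 →
    Incid p23 l2 → Incid p23 l3 → Incid p24 l2 → Incid p24 l4 →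
    p13 ≠ p14 → p13 ≠ p23 → p13 ≠ p24 → p14 ≠ p23 → p14 ≠ p24 → p23 ≠ p24 →
    ∃ q : Point, Incid q l3 ∧ Incid q l4

/-- A subplane of a projective rectangle: sets of points and lines which, with the
induced incidence, form a projective plane. -/
def ProjRect.IsSubplane {Point Line : Type} (R : ProjRect Point Line)
    (P' : Set Point) (L' : Set Line) : Prop :=
  (∀ p q, p ∈ P' → q ∈ P' → p ≠ q → ∃! l, l ∈ L' ∧ R.Incid p l ∧ R.Incid q l) ∧
  (∀ l m, l ∈ L' → m ∈ L' → l ≠ m → ∃ x, x ∈ P' ∧ R.Incid x l ∧ R.Incid x m) ∧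
  (∃ a b c d, a ∈ P' ∧ b ∈ P' ∧ c ∈ P' ∧ d ∈ P' ∧
    a ≠ b ∧ a ≠ c ∧ a ≠ d ∧ b ≠ c ∧ b ≠ d ∧ c ≠ d ∧
    (∀ l ∈ L', ¬(R.Incid a l ∧ R.Incid b l ∧ R.Incid c l)) ∧
    (∀ l ∈ L', ¬(R.Incid a l ∧ R.Incid b l ∧ R.Incid d l)) ∧
    (∀ l ∈ L', ¬(R.Incid a l ∧ R.Incid c l ∧ R.Incid d l)) ∧
    (∀ l ∈ L', ¬(R.Incid b l ∧ R.Incid c l ∧ R.Incid d l)))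

/-- A subplane is full if it contains every point of each ordinary line it contains. -/
def ProjRect.IsFull {Point Line : Type} (R : ProjRect Point Line)
    (P' : Set Point) (L' : Set Line) : Prop :=
  ∀ l ∈ L', ¬R.Incid R.D l → ∀ p, R.Incid p l → p ∈ P'

/-! For ordinary lines `a` and `b` meeting at `p`, call an ordinary line a *transversal* if it
meets both `a` and `b` away from `p`. The plane spanned by `a` and `b` has as points `D`, `p` and
the points of the transversals, and as lines all special lines, the transversals, and the
*radial* lines: ordinary lines through `p` meeting some transversal. Any two of these lines meet,
and any ordinary line through two of these points is again one of these lines; both facts come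
from repeated use of the restricted Pasch axiom (A6) on suitable pairs among `a`, `b` and the
transversals. Special lines lie in every such plane, which settles the cases involving them. -/

namespace ProjRect

variable {Point Line : Type} (R : ProjRect Point Line)

theorem line_eq_of_incid {x y : Point} {l l' : Line} (hxy : x ≠ y)
    (hxl : R.Incid x l) (hyl : R.Incid y l) (hxl' : R.Incid x l') (hyl' : R.Incid y l') :
    l = l' :=
  (R.A1 x y hxy).unique ⟨hxl, hyl⟩ ⟨hxl', hyl'⟩

theorem point_eq_of_incid {x y : Point} {l l' : Line} (hll' : l ≠ l')
    (hxl : R.Incid x l) (hxl' : R.Incid x l') (hyl : R.Incid y l) (hyl' : R.Incid y l') :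
    x = y :=
  by_contra fun hxy => hll' (R.line_eq_of_incid hxy hxl hyl hxl' hyl')

theorem exists_line {x y : Point} (hxy : x ≠ y) : ∃ l, R.Incid x l ∧ R.Incid y l :=
  (R.A1 x y hxy).exists

theorem ne_D_of_incid {x : Point} {l : Line} (hl : ¬R.Incid R.D l) (hxl : R.Incid x l) :
    x ≠ R.D :=
  fun hx => hl (hx ▸ hxl)

theorem exists_two_points_ne (l : Line) (z : Point) :
    ∃ x y, x ≠ y ∧ x ≠ z ∧ y ≠ z ∧ R.Incid x l ∧ R.Incid y l := by
  obtain ⟨x, y, w, hxy, hxw, hyw, hx, hy, hw⟩ := R.A3 l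
  by_cases hxz : x = z
  · subst hxz
    exact ⟨y, w, hyw, hxy.symm, hxw.symm, hy, hw⟩
  by_cases hyz : y = z
  · subst hyz
    exact ⟨x, w, hxw, hxz, hyw.symm, hx, hw⟩
  exact ⟨x, y, hxy, hxz, hyz, hx, hy⟩

theorem exists_point_ne_ne (l : Line) (z w : Point) : ∃ x, x ≠ z ∧ x ≠ w ∧ R.Incid x l := by
  obtain ⟨x, y, hxy, hxz, hyz, hx, hy⟩ := R.exists_two_points_ne l z
  by_cases hxw : x = w
  · exact ⟨y, hyz, fun hyw => hxy (hxw.trans hyw.symm), hy⟩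
  · exact ⟨x, hxz, hxw, hx⟩

theorem not_incid_D_of_incid_D {k l l' : Line} {z y y' : Point} (hzD : z ≠ R.D)
    (hzk : ¬R.Incid z k) (hyk : R.Incid y k) (hy'k : R.Incid y' k) (hyy' : y ≠ y')
    (hzl : R.Incid z l) (hyl : R.Incid y l) (hzl' : R.Incid z l') (hy'l' : R.Incid y' l')
    (hDl : R.Incid R.D l) : ¬R.Incid R.D l' := fun hDl' => by
  have hll' : l = l' := R.line_eq_of_incid hzD hzl hDl hzl' hDl'
  have hlk : l = k := R.line_eq_of_incid hyy' hyl (hll' ▸ hy'l') hyk hy'k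
  exact hzk (hlk ▸ hzl)

theorem exists_ordinary_line : ∃ l, ¬R.Incid R.D l := by
  obtain ⟨a, b, c, -, hab, hac, -, hbc, -, -, habc, -, -, -⟩ := R.A2
  by_contra! hspecial
  obtain ⟨lab, hab_a, hab_b⟩ := R.exists_line hab
  obtain ⟨lac, hac_a, hac_c⟩ := R.exists_line hac
  obtain ⟨lbc, hbc_b, hbc_c⟩ := R.exists_line hbc
  -- if `a ≠ D`, the special lines `lab` and `lac` through `a` coincide, making `a`, `b`, `c`
  -- collinear; likewise for `b`
  have haD : a = R.D := by_contra fun haD =>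
    habc lab ⟨hab_a, hab_b,
      R.line_eq_of_incid haD hac_a (hspecial lac) hab_a (hspecial lab) ▸ hac_c⟩
  have hbD : b = R.D := by_contra fun hbD =>
    habc lab ⟨hab_a, hab_b,
      R.line_eq_of_incid hbD hbc_b (hspecial lbc) hab_b (hspecial lab) ▸ hbc_c⟩
  exact hab (haD.trans hbD.symm)

structure OrdinaryPair (a b : Line) (p : Point) : Prop where
  left_ordinary : ¬R.Incid R.D a
  right_ordinary : ¬R.Incid R.D b
  ne : a ≠ b
  incid_left : R.Incid p a
  incid_right : R.Incid p b

theorem exists_ordinaryPair {a : Line} (ha : ¬R.Incid R.D a) : ∃ b p, R.OrdinaryPair a b p := by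
  obtain ⟨x, y, hxy, hxD, -, hx, hy⟩ := R.exists_two_points_ne a R.D
  obtain ⟨s, hxs, hDs⟩ := R.exists_line hxD
  have hsa : s ≠ a := fun hsa => ha (hsa ▸ hDs)
  obtain ⟨z, hzx, hzD, hzs⟩ := R.exists_point_ne_ne s x R.D
  have hza : ¬R.Incid z a := fun hza => hzx (R.point_eq_of_incid hsa hzs hza hxs hx)
  obtain ⟨b, hzb, hyb⟩ := R.exists_line fun hzy : z = y => hza (hzy ▸ hy)
  refine ⟨b, y, ha, fun hDb => ?_, fun hab => hza (hab ▸ hzb), hy, hyb⟩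
  have hbs : b = s := R.line_eq_of_incid hzD hzb hDb hzs hDs
  exact hxy (R.point_eq_of_incid hsa hxs hx (hbs ▸ hyb) hy)

def IsTransversal (a b : Line) (p : Point) (m : Line) : Prop :=
  ¬R.Incid R.D m ∧ (∃ x, x ≠ p ∧ R.Incid x a ∧ R.Incid x m) ∧
    ∃ y, y ≠ p ∧ R.Incid y b ∧ R.Incid y m

def IsRadial (a b : Line) (p : Point) (n : Line) : Prop :=
  ¬R.Incid R.D n ∧ R.Incid p n ∧ ∃ q, R.Incid q n ∧ ∃ m, R.IsTransversal a b p m ∧ R.Incid q m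

def planePoints (a b : Line) (p : Point) : Set Point :=
  {z | z = R.D ∨ z = p ∨ ∃ m, R.IsTransversal a b p m ∧ R.Incid z m}

def planeLines (a b : Line) (p : Point) : Set Line :=
  {l | R.Incid R.D l ∨ R.IsTransversal a b p l ∨ R.IsRadial a b p l}

variable {R} {a b : Line} {p : Point}

theorem IsTransversal.symm {m : Line} (hm : R.IsTransversal a b p m) :
    R.IsTransversal b a p m :=
  ⟨hm.1, hm.2.2, hm.2.1⟩

theorem IsRadial.symm {n : Line} (hn : R.IsRadial a b p n) : R.IsRadial b a p n :=
  let ⟨hDn, hpn, q, hqn, m, hm, hqm⟩ := hn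
  ⟨hDn, hpn, q, hqn, m, hm.symm, hqm⟩

namespace OrdinaryPair

theorem symm (h : R.OrdinaryPair a b p) : R.OrdinaryPair b a p :=
  ⟨h.right_ordinary, h.left_ordinary, h.ne.symm, h.incid_right, h.incid_left⟩

theorem eq_of_incid (h : R.OrdinaryPair a b p) {z : Point} (hza : R.Incid z a)
    (hzb : R.Incid z b) : z = p :=
  R.point_eq_of_incid h.ne hza hzb h.incid_left h.incid_right

theorem ne_of_incid (h : R.OrdinaryPair a b p) {x y : Point} (hxa : R.Incid x a) (hxp : x ≠ p)
    (hyb : R.Incid y b) : x ≠ y :=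
  fun hxy => hxp (h.eq_of_incid hxa (hxy ▸ hyb))

theorem not_incid_transversal (h : R.OrdinaryPair a b p) {m : Line}
    (hm : R.IsTransversal a b p m) : ¬R.Incid p m := fun hpm => by
  obtain ⟨-, ⟨x, hxp, hxa, hxm⟩, y, hyp, hyb, hym⟩ := hm
  have hma : m = a := R.line_eq_of_incid hxp hxm hpm hxa h.incid_left
  exact hyp (h.eq_of_incid (hma ▸ hym) hyb)

theorem ne_of_incid_transversal (h : R.OrdinaryPair a b p) {m : Line}
    (hm : R.IsTransversal a b p m) {z : Point} (hzm : R.Incid z m) : z ≠ p :=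
  fun hzp => h.not_incid_transversal hm (hzp ▸ hzm)

theorem transversal_ne_left (h : R.OrdinaryPair a b p) {m : Line}
    (hm : R.IsTransversal a b p m) : m ≠ a :=
  fun hma => h.not_incid_transversal hm (hma ▸ h.incid_left)

theorem exists_transversal_of_incid_left (h : R.OrdinaryPair a b p) {x : Point}
    (hxa : R.Incid x a) (hxp : x ≠ p) : ∃ m, R.IsTransversal a b p m ∧ R.Incid x m := by
  obtain ⟨y₁, y₂, hy₁₂, hy₁p, hy₂p, hy₁, hy₂⟩ := R.exists_two_points_ne b p
  obtain ⟨m₁, hxm₁, hym₁⟩ := R.exists_line (h.ne_of_incid hxa hxp hy₁)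
  obtain ⟨m₂, hxm₂, hym₂⟩ := R.exists_line (h.ne_of_incid hxa hxp hy₂)
  by_cases hDm₁ : R.Incid R.D m₁
  · have hDm₂ := R.not_incid_D_of_incid_D (R.ne_D_of_incid h.left_ordinary hxa)
      (fun hxb => hxp (h.eq_of_incid hxa hxb)) hy₁ hy₂ hy₁₂ hxm₁ hym₁ hxm₂ hym₂ hDm₁
    exact ⟨m₂, ⟨hDm₂, ⟨x, hxp, hxa, hxm₂⟩, y₂, hy₂p, hy₂, hym₂⟩, hxm₂⟩
  · exact ⟨m₁, ⟨hDm₁, ⟨x, hxp, hxa, hxm₁⟩, y₁, hy₁p, hy₁, hym₁⟩, hxm₁⟩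

theorem isRadial_left (h : R.OrdinaryPair a b p) : R.IsRadial a b p a := by
  obtain ⟨x, -, -, hxp, -, hxa, -⟩ := R.exists_two_points_ne a p
  obtain ⟨m, hm, hxm⟩ := h.exists_transversal_of_incid_left hxa hxp
  exact ⟨h.left_ordinary, h.incid_left, x, hxa, m, hm, hxm⟩

theorem transversals_meet (h : R.OrdinaryPair a b p) {m m' : Line}
    (hm : R.IsTransversal a b p m) (hm' : R.IsTransversal a b p m') :
    ∃ z, R.Incid z m ∧ R.Incid z m' := by
  obtain ⟨hDm, ⟨x, hxp, hxa, hxm⟩, y, hyp, hyb, hym⟩ := hm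
  obtain ⟨hDm', ⟨x', hxp', hxa', hxm'⟩, y', hyp', hyb', hym'⟩ := hm'
  by_cases hmm' : m = m'
  · exact ⟨x, hxm, hmm' ▸ hxm⟩
  by_cases hxx' : x = x'
  · exact ⟨x, hxm, hxx' ▸ hxm'⟩
  by_cases hyy' : y = y'
  · exact ⟨y, hym, hyy' ▸ hym'⟩
  exact R.A6 a b m m' p x x' y y' h.left_ordinary h.right_ordinary h.ne h.incid_left
    h.incid_right hmm' hxa hxm hxa' hxm' hyb hym hyb' hym' hxx' (h.ne_of_incid hxa hxp hyb)
    (h.ne_of_incid hxa hxp hyb') (h.ne_of_incid hxa' hxp' hyb) (h.ne_of_incid hxa' hxp' hyb') hyy'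

/-- Pasch on `a` and `m₀`, which meet on `a` away from `p`. -/
theorem radial_meets_transversal_of_ne (h : R.OrdinaryPair a b p) {n m m₀ : Line}
    {q r x : Point} (hpn : R.Incid p n) (hqn : R.Incid q n) (hm₀ : R.IsTransversal a b p m₀)
    (hqm₀ : R.Incid q m₀) (hm : R.IsTransversal a b p m) (hrm : R.Incid r m)
    (hrm₀ : R.Incid r m₀) (hxa : R.Incid x a) (hxm : R.Incid x m) (hrx : r ≠ x) :
    ∃ z, R.Incid z n ∧ R.Incid z m := by
  by_cases hqm : R.Incid q m
  · exact ⟨q, hqn, hqm⟩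
  have hqp := h.ne_of_incid_transversal hm₀ hqm₀
  by_cases hqa : R.Incid q a
  · have hna : n = a := R.line_eq_of_incid hqp hqn hpn hqa h.incid_left
    exact ⟨x, hna ▸ hxa, hxm⟩
  obtain ⟨x₀, -, hx₀a, hx₀m₀⟩ := hm₀.2.1
  have hpm := h.not_incid_transversal hm
  exact R.A6 a m₀ n m x₀ p x q r h.left_ordinary hm₀.1 (h.transversal_ne_left hm₀).symm hx₀a
    hx₀m₀ (fun hnm => hpm (hnm ▸ hpn)) h.incid_left hpn hxa hxm hqm₀ hqn hrm₀ hrm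
    (fun hpx => hpm (hpx ▸ hxm)) hqp.symm (fun hpr => hpm (hpr ▸ hrm))
    (fun hxq => hqa (hxq ▸ hxa)) hrx.symm (fun hqr => hqm (hqr ▸ hrm))

theorem radial_meets_transversal (h : R.OrdinaryPair a b p) {n m : Line}
    (hn : R.IsRadial a b p n) (hm : R.IsTransversal a b p m) :
    ∃ z, R.Incid z n ∧ R.Incid z m := by
  obtain ⟨-, hpn, q, hqn, m₀, hm₀, hqm₀⟩ := hn
  obtain ⟨r, hrm, hrm₀⟩ := h.transversals_meet hm hm₀
  obtain ⟨x, hxp, hxa, hxm⟩ := hm.2.1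
  obtain ⟨y, -, hyb, hym⟩ := hm.2.2
  by_cases hrx : r = x
  · have hry : r ≠ y := hrx ▸ h.ne_of_incid hxa hxp hyb
    exact h.symm.radial_meets_transversal_of_ne hpn hqn hm₀.symm hqm₀ hm.symm hrm hrm₀ hyb hym hry
  · exact h.radial_meets_transversal_of_ne hpn hqn hm₀ hqm₀ hm hrm hrm₀ hxa hxm hrx

/-- Pasch on the radial line `n` and the transversal `m₀`, which meet at `q`. -/
theorem exists_incid_right_of_join (h : R.OrdinaryPair a b p) {n m₀ c : Line}
    {q z x₀ y₀ : Point} (hDn : ¬R.Incid R.D n) (hpn : R.Incid p n) (hqn : R.Incid q n)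
    (hm₀ : R.IsTransversal a b p m₀) (hqm₀ : R.Incid q m₀) (hzn : R.Incid z n) (hzp : z ≠ p)
    (hza : ¬R.Incid z a) (hzm₀ : ¬R.Incid z m₀) (hx₀a : R.Incid x₀ a) (hx₀m₀ : R.Incid x₀ m₀)
    (hy₀b : R.Incid y₀ b) (hy₀m₀ : R.Incid y₀ m₀) (hzc : R.Incid z c) (hx₀c : R.Incid x₀ c) :
    ∃ w, w ≠ p ∧ R.Incid w b ∧ R.Incid w c := by
  have hx₀p := h.ne_of_incid_transversal hm₀ hx₀m₀
  have hy₀p := h.ne_of_incid_transversal hm₀ hy₀m₀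
  have hcb : c ≠ b := fun hcb => hx₀p (h.eq_of_incid hx₀a (hcb ▸ hx₀c))
  obtain ⟨w, hwc, hwb⟩ := R.A6 n m₀ c b q z p x₀ y₀ hDn hm₀.1
    (fun hnm => h.not_incid_transversal hm₀ (hnm ▸ hpn)) hqn hqm₀ hcb hzn hzc hpn
    h.incid_right hx₀m₀ hx₀c hy₀m₀ hy₀b hzp (fun hzx => hzm₀ (hzx ▸ hx₀m₀))
    (fun hzy => hzm₀ (hzy ▸ hy₀m₀)) hx₀p.symm hy₀p.symm (h.ne_of_incid hx₀a hx₀p hy₀b)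
  refine ⟨w, fun hwp => hza ?_, hwb, hwc⟩
  exact R.line_eq_of_incid hx₀p hx₀c (hwp ▸ hwc) hx₀a h.incid_left ▸ hzc

theorem exists_transversal_of_incid_radial (h : R.OrdinaryPair a b p) {n : Line}
    (hn : R.IsRadial a b p n) {z : Point} (hzn : R.Incid z n) (hzp : z ≠ p) :
    ∃ m, R.IsTransversal a b p m ∧ R.Incid z m := by
  obtain ⟨hDn, hpn, q, hqn, m₀, hm₀, hqm₀⟩ := hn
  by_cases hzm₀ : R.Incid z m₀
  · exact ⟨m₀, hm₀, hzm₀⟩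
  by_cases hza : R.Incid z a
  · exact h.exists_transversal_of_incid_left hza hzp
  by_cases hzb : R.Incid z b
  · obtain ⟨m, hm, hzm⟩ := h.symm.exists_transversal_of_incid_left hzb hzp
    exact ⟨m, hm.symm, hzm⟩
  obtain ⟨x₀, hx₀p, hx₀a, hx₀m₀⟩ := hm₀.2.1
  obtain ⟨y₀, hy₀p, hy₀b, hy₀m₀⟩ := hm₀.2.2
  obtain ⟨c₁, hzc₁, hx₀c₁⟩ := R.exists_line fun hzx : z = x₀ => hzm₀ (hzx ▸ hx₀m₀)
  obtain ⟨c₂, hzc₂, hy₀c₂⟩ := R.exists_line fun hzy : z = y₀ => hzm₀ (hzy ▸ hy₀m₀)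
  by_cases hDc₁ : R.Incid R.D c₁
  · have hDc₂ := R.not_incid_D_of_incid_D (R.ne_D_of_incid hDn hzn) hzm₀ hx₀m₀ hy₀m₀
      (h.ne_of_incid hx₀a hx₀p hy₀b) hzc₁ hx₀c₁ hzc₂ hy₀c₂ hDc₁
    refine ⟨c₂, IsTransversal.symm ⟨hDc₂, ⟨y₀, hy₀p, hy₀b, hy₀c₂⟩, ?_⟩, hzc₂⟩
    exact h.symm.exists_incid_right_of_join hDn hpn hqn hm₀.symm hqm₀ hzn hzp hzb hzm₀ hy₀b
      hy₀m₀ hx₀a hx₀m₀ hzc₂ hy₀c₂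
  · refine ⟨c₁, ⟨hDc₁, ⟨x₀, hx₀p, hx₀a, hx₀c₁⟩, ?_⟩, hzc₁⟩
    exact h.exists_incid_right_of_join hDn hpn hqn hm₀ hqm₀ hzn hzp hza hzm₀ hx₀a hx₀m₀ hy₀b
      hy₀m₀ hzc₁ hx₀c₁

/-- Pasch on the transversal `m` and `a`. -/
theorem exists_incid_right_of_incid_left (h : R.OrdinaryPair a b p) {n m : Line} {v q : Point}
    (hpn : ¬R.Incid p n) (hva : R.Incid v a) (hvn : R.Incid v n) (hm : R.IsTransversal a b p m)
    (hqn : R.Incid q n) (hqm : R.Incid q m) (hqa : ¬R.Incid q a) (hqb : ¬R.Incid q b) :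
    ∃ w, R.Incid w b ∧ R.Incid w n := by
  obtain ⟨x, -, hxa, hxm⟩ := hm.2.1
  obtain ⟨y, hyp, hyb, hym⟩ := hm.2.2
  obtain ⟨w, hwn, hwb⟩ := R.A6 m a n b x q y v p hm.1 h.left_ordinary
    (h.transversal_ne_left hm) hxm hxa (fun hnb => hpn (hnb ▸ h.incid_right)) hqm hqn hym hyb
    hva hvn h.incid_left h.incid_right (fun hqy => hqb (hqy ▸ hyb))
    (fun hqv => hqa (hqv ▸ hva)) (fun hqp => hpn (hqp ▸ hqn)) (h.symm.ne_of_incid hyb hyp hva)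
    hyp (fun hvp => hpn (hvp ▸ hvn))
  exact ⟨w, hwb, hwn⟩

theorem exists_incid_right_of_incid_left_of_incid_transversals (h : R.OrdinaryPair a b p)
    {n m₁ m₂ : Line} {v q₁ q₂ : Point} (hpn : ¬R.Incid p n) (hva : R.Incid v a)
    (hvn : R.Incid v n) (hq₁₂ : q₁ ≠ q₂) (hq₁n : R.Incid q₁ n) (hq₂n : R.Incid q₂ n)
    (hm₁ : R.IsTransversal a b p m₁) (hq₁m₁ : R.Incid q₁ m₁)
    (hm₂ : R.IsTransversal a b p m₂) (hq₂m₂ : R.Incid q₂ m₂) :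
    ∃ w, R.Incid w b ∧ R.Incid w n := by
  by_cases hq₁b : R.Incid q₁ b
  · exact ⟨q₁, hq₁b, hq₁n⟩
  by_cases hq₂b : R.Incid q₂ b
  · exact ⟨q₂, hq₂b, hq₂n⟩
  by_cases hq₁a : R.Incid q₁ a
  · have hq₂a : ¬R.Incid q₂ a := fun hq₂a =>
      hpn (R.line_eq_of_incid hq₁₂ hq₁a hq₂a hq₁n hq₂n ▸ h.incid_left)
    exact h.exists_incid_right_of_incid_left hpn hva hvn hm₂ hq₂n hq₂m₂ hq₂a hq₂b
  · exact h.exists_incid_right_of_incid_left hpn hva hvn hm₁ hq₁n hq₁m₁ hq₁a hq₁b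

/-- Pasch on the transversals `m₁` and `m₂`, which meet `a` at distinct points. -/
theorem exists_incid_left_of_incid_transversals (h : R.OrdinaryPair a b p)
    {n m₁ m₂ : Line} {q₁ q₂ x₁ x₂ : Point} (hq₁₂ : q₁ ≠ q₂) (hq₁n : R.Incid q₁ n)
    (hq₂n : R.Incid q₂ n) (hm₁ : R.IsTransversal a b p m₁) (hq₁m₁ : R.Incid q₁ m₁)
    (hm₂ : R.IsTransversal a b p m₂) (hq₂m₂ : R.Incid q₂ m₂) (hx₁a : R.Incid x₁ a)
    (hx₁m₁ : R.Incid x₁ m₁) (hx₂a : R.Incid x₂ a) (hx₂m₂ : R.Incid x₂ m₂) (hx₁₂ : x₁ ≠ x₂) :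
    ∃ v, R.Incid v a ∧ R.Incid v n := by
  by_cases hq₁a : R.Incid q₁ a
  · exact ⟨q₁, hq₁a, hq₁n⟩
  by_cases hq₂a : R.Incid q₂ a
  · exact ⟨q₂, hq₂a, hq₂n⟩
  have hm₁₂ : m₁ ≠ m₂ := fun hm₁₂ =>
    hx₁₂ (R.point_eq_of_incid (h.transversal_ne_left hm₁) hx₁m₁ hx₁a (hm₁₂ ▸ hx₂m₂) hx₂a)
  obtain ⟨r, hrm₁, hrm₂⟩ := h.transversals_meet hm₁ hm₂
  obtain ⟨v, hvn, hva⟩ := R.A6 m₁ m₂ n a r q₁ x₁ q₂ x₂ hm₁.1 hm₂.1 hm₁₂ hrm₁ hrm₂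
    (fun hna => hq₁a (hna ▸ hq₁n)) hq₁m₁ hq₁n hx₁m₁ hx₁a hq₂m₂ hq₂n hx₂m₂ hx₂a
    (fun hq => hq₁a (hq ▸ hx₁a)) hq₁₂ (fun hq => hq₁a (hq ▸ hx₂a))
    (fun hq => hq₂a (hq.symm ▸ hx₁a)) hx₁₂ (fun hq => hq₂a (hq ▸ hx₂a))
  exact ⟨v, hva, hvn⟩

theorem exists_incid_left_or_right (h : R.OrdinaryPair a b p) {n m₁ m₂ : Line}
    {q₁ q₂ : Point} (hq₁₂ : q₁ ≠ q₂) (hq₁n : R.Incid q₁ n) (hq₂n : R.Incid q₂ n)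
    (hm₁ : R.IsTransversal a b p m₁) (hq₁m₁ : R.Incid q₁ m₁)
    (hm₂ : R.IsTransversal a b p m₂) (hq₂m₂ : R.Incid q₂ m₂) :
    (∃ v, R.Incid v a ∧ R.Incid v n) ∨ ∃ w, R.Incid w b ∧ R.Incid w n := by
  obtain ⟨x₁, hx₁p, hx₁a, hx₁m₁⟩ := hm₁.2.1
  obtain ⟨y₁, -, hy₁b, hy₁m₁⟩ := hm₁.2.2
  obtain ⟨x₂, -, hx₂a, hx₂m₂⟩ := hm₂.2.1
  obtain ⟨y₂, -, hy₂b, hy₂m₂⟩ := hm₂.2.2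
  by_cases hm₁₂ : m₁ = m₂
  · have hnm₁ : n = m₁ := R.line_eq_of_incid hq₁₂ hq₁n hq₂n hq₁m₁ (hm₁₂ ▸ hq₂m₂)
    exact Or.inl ⟨x₁, hx₁a, hnm₁ ▸ hx₁m₁⟩
  by_cases hx₁₂ : x₁ = x₂
  · have hy₁₂ : y₁ ≠ y₂ := fun hy₁₂ => hm₁₂ (R.line_eq_of_incid (h.ne_of_incid hx₁a hx₁p hy₁b)
      hx₁m₁ hy₁m₁ (hx₁₂ ▸ hx₂m₂) (hy₁₂ ▸ hy₂m₂))
    exact Or.inr (h.symm.exists_incid_left_of_incid_transversals hq₁₂ hq₁n hq₂n hm₁.symm hq₁m₁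
      hm₂.symm hq₂m₂ hy₁b hy₁m₁ hy₂b hy₂m₂ hy₁₂)
  · exact Or.inl (h.exists_incid_left_of_incid_transversals hq₁₂ hq₁n hq₂n hm₁ hq₁m₁ hm₂ hq₂m₂
      hx₁a hx₁m₁ hx₂a hx₂m₂ hx₁₂)

theorem isTransversal_of_incid_transversals (h : R.OrdinaryPair a b p) {n m₁ m₂ : Line}
    {q₁ q₂ : Point} (hDn : ¬R.Incid R.D n) (hpn : ¬R.Incid p n) (hq₁₂ : q₁ ≠ q₂)
    (hq₁n : R.Incid q₁ n) (hq₂n : R.Incid q₂ n) (hm₁ : R.IsTransversal a b p m₁)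
    (hq₁m₁ : R.Incid q₁ m₁) (hm₂ : R.IsTransversal a b p m₂) (hq₂m₂ : R.Incid q₂ m₂) :
    R.IsTransversal a b p n := by
  have hne : ∀ {z}, R.Incid z n → z ≠ p := fun hzn hzp => hpn (hzp ▸ hzn)
  rcases h.exists_incid_left_or_right hq₁₂ hq₁n hq₂n hm₁ hq₁m₁ hm₂ hq₂m₂ with
    ⟨v, hva, hvn⟩ | ⟨w, hwb, hwn⟩
  · obtain ⟨w, hwb, hwn⟩ := h.exists_incid_right_of_incid_left_of_incid_transversals hpn hva hvn
      hq₁₂ hq₁n hq₂n hm₁ hq₁m₁ hm₂ hq₂m₂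
    exact ⟨hDn, ⟨v, hne hvn, hva, hvn⟩, w, hne hwn, hwb, hwn⟩
  · obtain ⟨v, hva, hvn⟩ := h.symm.exists_incid_right_of_incid_left_of_incid_transversals hpn
      hwb hwn hq₁₂ hq₁n hq₂n hm₁.symm hq₁m₁ hm₂.symm hq₂m₂
    exact ⟨hDn, ⟨v, hne hvn, hva, hvn⟩, w, hne hwn, hwb, hwn⟩

theorem mem_planeLines_of_incid (h : R.OrdinaryPair a b p) {z w : Point}
    (hz : z ∈ R.planePoints a b p) (hw : w ∈ R.planePoints a b p) (hzw : z ≠ w) {l : Line}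
    (hzl : R.Incid z l) (hwl : R.Incid w l) : l ∈ R.planeLines a b p := by
  by_cases hDl : R.Incid R.D l
  · exact Or.inl hDl
  have hzD := R.ne_D_of_incid hDl hzl
  have hwD := R.ne_D_of_incid hDl hwl
  rcases hz with hzD' | hzp | ⟨m₁, hm₁, hzm₁⟩
  · exact absurd hzD' hzD
  · rcases hw with hwD' | hwp | ⟨m₂, hm₂, hwm₂⟩
    · exact absurd hwD' hwD
    · exact absurd (hzp.trans hwp.symm) hzw
    · exact Or.inr (Or.inr ⟨hDl, hzp ▸ hzl, w, hwl, m₂, hm₂, hwm₂⟩)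
  rcases hw with hwD' | hwp | ⟨m₂, hm₂, hwm₂⟩
  · exact absurd hwD' hwD
  · exact Or.inr (Or.inr ⟨hDl, hwp ▸ hwl, z, hzl, m₁, hm₁, hzm₁⟩)
  by_cases hpl : R.Incid p l
  · exact Or.inr (Or.inr ⟨hDl, hpl, z, hzl, m₁, hm₁, hzm₁⟩)
  · exact Or.inr (Or.inl
      (h.isTransversal_of_incid_transversals hDl hpl hzw hzl hwl hm₁ hzm₁ hm₂ hwm₂))

theorem isFull (h : R.OrdinaryPair a b p) :
    R.IsFull (R.planePoints a b p) (R.planeLines a b p) := by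
  rintro l (hDl | hl | hl) hlD z hzl
  · exact absurd hDl hlD
  · exact Or.inr (Or.inr ⟨l, hl, hzl⟩)
  · by_cases hzp : z = p
    · exact Or.inr (Or.inl hzp)
    · exact Or.inr (Or.inr (h.exists_transversal_of_incid_radial hl hzl hzp))

theorem ordinary_planeLines_meet (h : R.OrdinaryPair a b p) {l m : Line}
    (hl : l ∈ R.planeLines a b p) (hlD : ¬R.Incid R.D l) (hm : m ∈ R.planeLines a b p)
    (hmD : ¬R.Incid R.D m) : ∃ z, R.Incid z l ∧ R.Incid z m := by
  rcases hl.resolve_left hlD with hl | hl <;> rcases hm.resolve_left hmD with hm | hm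
  · exact h.transversals_meet hl hm
  · obtain ⟨z, hzm, hzl⟩ := h.radial_meets_transversal hm hl
    exact ⟨z, hzl, hzm⟩
  · exact h.radial_meets_transversal hl hm
  · exact ⟨p, hl.2.1, hm.2.1⟩

theorem exists_mem_planePoints_incid (h : R.OrdinaryPair a b p) {l m : Line}
    (hl : l ∈ R.planeLines a b p) (hm : m ∈ R.planeLines a b p) (hlm : l ≠ m) :
    ∃ z, z ∈ R.planePoints a b p ∧ R.Incid z l ∧ R.Incid z m := by
  by_cases hlD : R.Incid R.D l <;> by_cases hmD : R.Incid R.D m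
  · exact ⟨R.D, Or.inl rfl, hlD, hmD⟩
  · obtain ⟨z, hzl, hzm⟩ := (R.A5 l m hlD hlm.symm).exists
    exact ⟨z, h.isFull m hm hmD z hzm, hzl, hzm⟩
  · obtain ⟨z, hzm, hzl⟩ := (R.A5 m l hmD hlm).exists
    exact ⟨z, h.isFull l hl hlD z hzl, hzl, hzm⟩
  · obtain ⟨z, hzl, hzm⟩ := h.ordinary_planeLines_meet hl hlD hm hmD
    exact ⟨z, h.isFull l hl hlD z hzl, hzl, hzm⟩

theorem ordinary_of_join_special (h : R.OrdinaryPair a b p) {u u' v v' : Point}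
    {l l₁ l₂ : Line} (hua : R.Incid u a) (hup : u ≠ p) (hu'a : R.Incid u' a) (huu' : u ≠ u')
    (hvb : R.Incid v b) (hvp : v ≠ p) (hv'b : R.Incid v' b) (hvv' : v ≠ v')
    (hul : R.Incid u l) (hvl : R.Incid v l) (hul₁ : R.Incid u l₁) (hv'l₁ : R.Incid v' l₁)
    (hu'l₂ : R.Incid u' l₂) (hvl₂ : R.Incid v l₂) (hDl : R.Incid R.D l) :
    ¬R.Incid R.D l₁ ∧ ¬R.Incid R.D l₂ :=
  ⟨R.not_incid_D_of_incid_D (R.ne_D_of_incid h.left_ordinary hua)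
      (fun hub => hup (h.eq_of_incid hua hub)) hvb hv'b hvv' hul hvl hul₁ hv'l₁ hDl,
    R.not_incid_D_of_incid_D (R.ne_D_of_incid h.right_ordinary hvb)
      (fun hva => hvp (h.eq_of_incid hva hvb)) hua hu'a huu' hvl hul hvl₂ hu'l₂ hDl⟩

theorem exists_transversal_pair (h : R.OrdinaryPair a b p) :
    ∃ m₁ m₂ x₁ x₂ y₁ y₂, R.IsTransversal a b p m₁ ∧ R.IsTransversal a b p m₂ ∧
      x₁ ≠ x₂ ∧ y₁ ≠ y₂ ∧ R.Incid x₁ a ∧ R.Incid x₂ a ∧ R.Incid y₁ b ∧ R.Incid y₂ b ∧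
      R.Incid x₁ m₁ ∧ R.Incid y₁ m₁ ∧ R.Incid x₂ m₂ ∧ R.Incid y₂ m₂ := by
  obtain ⟨u₁, u₂, hu₁₂, hu₁p, hu₂p, hu₁, hu₂⟩ := R.exists_two_points_ne a p
  obtain ⟨v₁, v₂, hv₁₂, hv₁p, hv₂p, hv₁, hv₂⟩ := R.exists_two_points_ne b p
  have transversal {u v l} (hu : R.Incid u a) (hup : u ≠ p) (hv : R.Incid v b) (hvp : v ≠ p)
      (hul : R.Incid u l) (hvl : R.Incid v l) (hDl : ¬R.Incid R.D l) :
      R.IsTransversal a b p l :=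
    ⟨hDl, ⟨u, hup, hu, hul⟩, v, hvp, hv, hvl⟩
  obtain ⟨m₁₁, hu₁m₁₁, hv₁m₁₁⟩ := R.exists_line (h.ne_of_incid hu₁ hu₁p hv₁)
  obtain ⟨m₁₂, hu₁m₁₂, hv₂m₁₂⟩ := R.exists_line (h.ne_of_incid hu₁ hu₁p hv₂)
  obtain ⟨m₂₁, hu₂m₂₁, hv₁m₂₁⟩ := R.exists_line (h.ne_of_incid hu₂ hu₂p hv₁)
  obtain ⟨m₂₂, hu₂m₂₂, hv₂m₂₂⟩ := R.exists_line (h.ne_of_incid hu₂ hu₂p hv₂)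
  by_cases hD : ¬R.Incid R.D m₁₁ ∧ ¬R.Incid R.D m₂₂
  · exact ⟨m₁₁, m₂₂, u₁, u₂, v₁, v₂, transversal hu₁ hu₁p hv₁ hv₁p hu₁m₁₁ hv₁m₁₁ hD.1,
      transversal hu₂ hu₂p hv₂ hv₂p hu₂m₂₂ hv₂m₂₂ hD.2, hu₁₂, hv₁₂, hu₁, hu₂, hv₁, hv₂,
      hu₁m₁₁, hv₁m₁₁, hu₂m₂₂, hv₂m₂₂⟩
  have hD' : ¬R.Incid R.D m₁₂ ∧ ¬R.Incid R.D m₂₁ := by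
    rcases not_and_or.mp hD with hD₁₁ | hD₂₂
    · exact h.ordinary_of_join_special hu₁ hu₁p hu₂ hu₁₂ hv₁ hv₁p hv₂ hv₁₂ hu₁m₁₁ hv₁m₁₁
        hu₁m₁₂ hv₂m₁₂ hu₂m₂₁ hv₁m₂₁ (not_not.mp hD₁₁)
    · exact (h.ordinary_of_join_special hu₂ hu₂p hu₁ hu₁₂.symm hv₂ hv₂p hv₁ hv₁₂.symm hu₂m₂₂
        hv₂m₂₂ hu₂m₂₁ hv₁m₂₁ hu₁m₁₂ hv₂m₁₂ (not_not.mp hD₂₂)).symm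
  exact ⟨m₁₂, m₂₁, u₁, u₂, v₂, v₁, transversal hu₁ hu₁p hv₂ hv₂p hu₁m₁₂ hv₂m₁₂ hD'.1,
    transversal hu₂ hu₂p hv₁ hv₁p hu₂m₂₁ hv₁m₂₁ hD'.2, hu₁₂, hv₁₂.symm, hu₁, hu₂, hv₂, hv₁,
    hu₁m₁₂, hv₂m₁₂, hu₂m₂₁, hv₁m₂₁⟩

theorem exists_quadrangle (h : R.OrdinaryPair a b p) :
    ∃ w x y z, w ∈ R.planePoints a b p ∧ x ∈ R.planePoints a b p ∧ y ∈ R.planePoints a b p ∧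
      z ∈ R.planePoints a b p ∧ w ≠ x ∧ w ≠ y ∧ w ≠ z ∧ x ≠ y ∧ x ≠ z ∧ y ≠ z ∧
      (∀ l ∈ R.planeLines a b p, ¬(R.Incid w l ∧ R.Incid x l ∧ R.Incid y l)) ∧
      (∀ l ∈ R.planeLines a b p, ¬(R.Incid w l ∧ R.Incid x l ∧ R.Incid z l)) ∧
      (∀ l ∈ R.planeLines a b p, ¬(R.Incid w l ∧ R.Incid y l ∧ R.Incid z l)) ∧
      (∀ l ∈ R.planeLines a b p, ¬(R.Incid x l ∧ R.Incid y l ∧ R.Incid z l)) := by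
  obtain ⟨m₁, m₂, x₁, x₂, y₁, y₂, hm₁, hm₂, hx₁₂, hy₁₂, hx₁a, hx₂a, hy₁b, hy₂b, hx₁m₁, hy₁m₁,
    hx₂m₂, hy₂m₂⟩ := h.exists_transversal_pair
  have hm₁a := h.transversal_ne_left hm₁
  have hm₁b := h.symm.transversal_ne_left hm₁.symm
  have hm₁₂ : m₁ ≠ m₂ := fun hm₁₂ =>
    hx₁₂ (R.point_eq_of_incid hm₁a hx₁m₁ hx₁a (hm₁₂ ▸ hx₂m₂) hx₂a)
  obtain ⟨q, hqm₁, hqm₂⟩ := h.transversals_meet hm₁ hm₂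
  have hx₁p := h.ne_of_incid_transversal hm₁ hx₁m₁
  have hy₂p := h.ne_of_incid_transversal hm₂ hy₂m₂
  have hqa : ¬R.Incid q a := fun hqa => hx₁₂ <|
    (R.point_eq_of_incid hm₁a hqm₁ hqa hx₁m₁ hx₁a).symm.trans
      (R.point_eq_of_incid (h.transversal_ne_left hm₂) hqm₂ hqa hx₂m₂ hx₂a)
  have hqb : ¬R.Incid q b := fun hqb => hy₁₂ <|
    (R.point_eq_of_incid hm₁b hqm₁ hqb hy₁m₁ hy₁b).symm.trans
      (R.point_eq_of_incid (h.symm.transversal_ne_left hm₂.symm) hqm₂ hqb hy₂m₂ hy₂b)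
  have eq_left {l} (hpl : R.Incid p l) (hx₁l : R.Incid x₁ l) : l = a :=
    R.line_eq_of_incid hx₁p hx₁l hpl hx₁a h.incid_left
  have eq_right {l} (hpl : R.Incid p l) (hy₂l : R.Incid y₂ l) : l = b :=
    R.line_eq_of_incid hy₂p hy₂l hpl hy₂b h.incid_right
  have hx₁q : x₁ ≠ q := fun hx₁q => hqa (hx₁q ▸ hx₁a)
  refine ⟨p, x₁, y₂, q, Or.inr (Or.inl rfl), Or.inr (Or.inr ⟨m₁, hm₁, hx₁m₁⟩),
    Or.inr (Or.inr ⟨m₂, hm₂, hy₂m₂⟩), Or.inr (Or.inr ⟨m₁, hm₁, hqm₁⟩), hx₁p.symm, hy₂p.symm,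
    (h.ne_of_incid_transversal hm₁ hqm₁).symm, h.ne_of_incid hx₁a hx₁p hy₂b, hx₁q,
    fun hy₂q => hqb (hy₂q ▸ hy₂b), ?_, ?_, ?_, ?_⟩
  · rintro l - ⟨hpl, hx₁l, hy₂l⟩
    exact hy₂p (h.eq_of_incid (eq_left hpl hx₁l ▸ hy₂l) hy₂b)
  · rintro l - ⟨hpl, hx₁l, hql⟩
    exact hqa (eq_left hpl hx₁l ▸ hql)
  · rintro l - ⟨hpl, hy₂l, hql⟩
    exact hqb (eq_right hpl hy₂l ▸ hql)
  · rintro l - ⟨hx₁l, hy₂l, hql⟩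
    have hlm₁ : l = m₁ := R.line_eq_of_incid hx₁q hx₁l hql hx₁m₁ hqm₁
    exact hy₁₂ (R.point_eq_of_incid hm₁b hy₁m₁ hy₁b (hlm₁ ▸ hy₂l) hy₂b)

theorem isSubplane (h : R.OrdinaryPair a b p) :
    R.IsSubplane (R.planePoints a b p) (R.planeLines a b p) := by
  refine ⟨fun z w hz hw hzw => ?_, fun l m hl hm hlm => h.exists_mem_planePoints_incid hl hm hlm,
    h.exists_quadrangle⟩
  obtain ⟨l, hzl, hwl⟩ := R.exists_line hzw
  exact ⟨l, ⟨h.mem_planeLines_of_incid hz hw hzw hzl hwl, hzl, hwl⟩,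
    fun l' hl' => R.line_eq_of_incid hzw hl'.2.1 hl'.2.2 hzl hwl⟩

end OrdinaryPair

end ProjRect

/-- Any two lines that intersect in a point are coplanar: they both belong (as lines,
or as intersections of special lines with the plane) to a common full subplane. -/
theorem stmt_12 {Point Line : Type} (R : ProjRect Point Line) (l1 l2 : Line)
    (hne : l1 ≠ l2) (p : Point) (hp1 : R.Incid p l1) (hp2 : R.Incid p l2) :
    ∃ (P' : Set Point) (L' : Set Line),
      R.IsSubplane P' L' ∧ R.IsFull P' L' ∧ l1 ∈ L' ∧ l2 ∈ L' := by
  by_cases hD1 : R.Incid R.D l1 <;> by_cases hD2 : R.Incid R.D l2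
  · obtain ⟨a, ha⟩ := R.exists_ordinary_line
    obtain ⟨b, q, h⟩ := R.exists_ordinaryPair ha
    exact ⟨_, _, h.isSubplane, h.isFull, Or.inl hD1, Or.inl hD2⟩
  · obtain ⟨b, q, h⟩ := R.exists_ordinaryPair hD2
    exact ⟨_, _, h.isSubplane, h.isFull, Or.inl hD1, Or.inr (Or.inr h.isRadial_left)⟩
  · obtain ⟨b, q, h⟩ := R.exists_ordinaryPair hD1
    exact ⟨_, _, h.isSubplane, h.isFull, Or.inr (Or.inr h.isRadial_left), Or.inl hD2⟩
  · have h : R.OrdinaryPair l1 l2 p := ⟨hD1, hD2, hne, hp1, hp2⟩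
    exact ⟨_, _, h.isSubplane, h.isFull, Or.inr (Or.inr h.isRadial_left),
      Or.inr (Or.inr h.symm.isRadial_left.symm)⟩
end

section
/- In a finite projective rectangle of order (m,n), the number of full projective subplanes containing a given ordinary line is (n-1)/(m-1), and in particular m-1 divides n-1. -/
/-- A projective rectangle has order (m,n) if it has exactly m+1 special lines and
each special line has exactly n+1 points. -/
def ProjRect.HasOrder {Point Line : Type} (R : ProjRect Point Line) (m n : ℕ) : Prop :=
  Set.ncard {l : Line | R.Incid R.D l} = m + 1 ∧
  ∀ s : Line, R.Incid R.D s → Set.ncard {p : Point | R.Incid p s} = n + 1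

namespace Set

variable {α β : Type*} {A : Set α} {B : Set β}

theorem ncard_eq_ncard_of_rel (r : α → β → Prop)
    (hAB : ∀ a ∈ A, ∃ b ∈ B, r a b) (hBA : ∀ b ∈ B, ∃ a ∈ A, r a b)
    (hinjA : ∀ a ∈ A, ∀ a' ∈ A, ∀ b ∈ B, r a b → r a' b → a = a')
    (hinjB : ∀ b ∈ B, ∀ b' ∈ B, ∀ a ∈ A, r a b → r a b' → b = b') :
    A.ncard = B.ncard := by
  choose f hfB hf using hAB
  refine ncard_congr f hfB (fun a a' ha ha' e => hinjA a ha a' ha' _ (hfB a ha) (hf a ha)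
    (e ▸ hf a' ha')) fun b hb => ?_
  obtain ⟨a, ha, hab⟩ := hBA b hb
  exact ⟨a, ha, hinjB _ (hfB a ha) b hb a ha (hf a ha) hab⟩

theorem forall_exists_rel_of_ncard_le (hB : B.Finite) (hcard : B.ncard ≤ A.ncard)
    (r : α → β → Prop) (hAB : ∀ a ∈ A, ∃ b ∈ B, r a b)
    (hinj : ∀ a ∈ A, ∀ a' ∈ A, ∀ b ∈ B, r a b → r a' b → a = a') :
    ∀ b ∈ B, ∃ a ∈ A, r a b := by
  intro b₀ hb₀
  by_contra! hnone
  have : Nonempty β := ⟨b₀⟩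
  choose! f hfB hf using hAB
  have hlt : A.ncard < B.ncard := calc
    A.ncard ≤ (B \ {b₀}).ncard :=
      ncard_le_ncard_of_injOn f (fun a ha => ⟨hfB a ha, fun e => hnone a ha (e ▸ hf a ha)⟩)
        (fun a ha a' ha' e => hinj a ha a' ha' _ (hfB a ha) (hf a ha) (e ▸ hf a' ha')) hB.sdiff
    _ < B.ncard := ncard_sdiff_singleton_lt_of_mem hb₀ hB
  omega

theorem ncard_eq_ncard_image_mul {f : α → β} (hA : A.Finite) {k : ℕ}
    (hfib : ∀ b ∈ f '' A, {a ∈ A | f a = b}.ncard = k) : A.ncard = (f '' A).ncard * k := by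
  classical
  lift A to Finset α using hA
  rw [← Finset.coe_image, ncard_coe_finset, ncard_coe_finset, Finset.card_eq_sum_card_image f A,
    Finset.sum_const_nat fun b hb => ?_]
  rw [← hfib b (by simpa using hb), ← ncard_coe_finset, Finset.coe_filter]
  rfl

end Set

namespace ProjRect

variable {Point Line : Type} {R : ProjRect Point Line} {m n : ℕ}
  {u v w x y z a b c q : Point} {g g' k l s t : Line}

noncomputable def join (R : ProjRect Point Line) {x y : Point} (h : x ≠ y) : Line :=
  (R.A1 x y h).choose

theorem incid_join_left (h : x ≠ y) : R.Incid x (R.join h) := (R.A1 x y h).choose_spec.1.1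

theorem incid_join_right (h : x ≠ y) : R.Incid y (R.join h) := (R.A1 x y h).choose_spec.1.2

theorem eq_join (h : x ≠ y) (hx : R.Incid x g) (hy : R.Incid y g) : g = R.join h :=
  (R.A1 x y h).choose_spec.2 g ⟨hx, hy⟩

theorem line_eq_of_incid_s15 (h : x ≠ y) (hx : R.Incid x g) (hy : R.Incid y g)
    (hx' : R.Incid x k) (hy' : R.Incid y k) : g = k :=
  (eq_join h hx hy).trans (eq_join h hx' hy').symm

theorem point_eq_of_incid_s15 (h : g ≠ k) (hx : R.Incid x g) (hx' : R.Incid x k)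
    (hy : R.Incid y g) (hy' : R.Incid y k) : x = y :=
  by_contra fun hxy => h (line_eq_of_incid_s15 hxy hx hy hx' hy')

def Collinear (R : ProjRect Point Line) (x y z : Point) : Prop :=
  ∃ g, R.Incid x g ∧ R.Incid y g ∧ R.Incid z g

theorem Collinear.swap (h : R.Collinear x y z) : R.Collinear x z y :=
  let ⟨g, hx, hy, hz⟩ := h; ⟨g, hx, hz, hy⟩

theorem incid_of_collinear (hxz : x ≠ z) (h : R.Collinear x y z) (hx : R.Incid x g)
    (hz : R.Incid z g) : R.Incid y g := by
  obtain ⟨k, hxk, hyk, hzk⟩ := h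
  exact line_eq_of_incid_s15 hxz hxk hzk hx hz ▸ hyk

theorem eq_of_collinear (hcx : c ≠ x) (hcg : ¬R.Incid c g) (ha : R.Incid a g)
    (hb : R.Incid b g) (hxa : R.Collinear c x a) (hxb : R.Collinear c x b) : a = b := by
  obtain ⟨k, hck, hxk, hak⟩ := hxa
  obtain ⟨k', hck', hxk', hbk'⟩ := hxb
  obtain rfl := line_eq_of_incid_s15 hcx hck hxk hck' hxk'
  exact point_eq_of_incid_s15 (show k ≠ g from fun e => hcg (e ▸ hck)) hak ha hbk' hb

theorem point_ne_of_incid_of_not_incid (hx : R.Incid x g) (hy : ¬R.Incid y g) : x ≠ y :=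
  fun e => hy (e ▸ hx)

theorem line_ne_of_not_incid_of_incid (hg : ¬R.Incid x g) (hk : R.Incid x k) : g ≠ k :=
  fun e => hg (e ▸ hk)

theorem ne_D_of_incid_s15 (hg : ¬R.Incid R.D g) (hx : R.Incid x g) : x ≠ R.D :=
  fun e => hg (e ▸ hx)

theorem exists_incid_ne (R : ProjRect Point Line) (g : Line) (x y : Point) :
    ∃ z, R.Incid z g ∧ z ≠ x ∧ z ≠ y := by
  obtain ⟨a, b, c, hab, hac, hbc, ha, hb, hc⟩ := R.A3 g
  by_cases ha' : a ≠ x ∧ a ≠ y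
  · exact ⟨a, ha, ha'⟩
  by_cases hb' : b ≠ x ∧ b ≠ y
  · exact ⟨b, hb, hb'⟩
  exact ⟨c, hc, by grind, by grind⟩

theorem exists_incid_special (hs : R.Incid R.D s) (hgs : g ≠ s) :
    ∃ x, R.Incid x s ∧ R.Incid x g :=
  (R.A5 s g hs hgs).exists

theorem exists_two_incid_not_incid (hg : ¬R.Incid R.D g) (hs : R.Incid R.D s) :
    ∃ x y, x ≠ y ∧ R.Incid x g ∧ R.Incid y g ∧ ¬R.Incid x s ∧ ¬R.Incid y s := by
  obtain ⟨p, hps, hpg⟩ := exists_incid_special hs (line_ne_of_not_incid_of_incid hg hs)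
  obtain ⟨x, hxg, hxp, -⟩ := R.exists_incid_ne g p p
  obtain ⟨y, hyg, hyp, hyx⟩ := R.exists_incid_ne g p x
  have off_s : ∀ z, R.Incid z g → z ≠ p → ¬R.Incid z s := fun z hzg hzp hzs =>
    hzp (point_eq_of_incid_s15 (line_ne_of_not_incid_of_incid hg hs) hzg hzs hpg hps)
  exact ⟨x, y, hyx.symm, hxg, hyg, off_s x hxg hxp, off_s y hyg hyp⟩

theorem exists_special (R : ProjRect Point Line) : ∃ s, R.Incid R.D s := by
  obtain ⟨a, b, -, -, hab, -⟩ := R.A2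
  by_cases haD : a = R.D
  · have hbD : b ≠ R.D := fun e => hab (haD.trans e.symm)
    exact ⟨R.join hbD, incid_join_right hbD⟩
  · exact ⟨R.join haD, incid_join_right haD⟩

theorem ncard_incid_of_not_incid_D (h : R.HasOrder m n) (hg : ¬R.Incid R.D g) :
    {x | R.Incid x g}.ncard = m + 1 := by
  rw [← h.1]
  refine Set.ncard_eq_ncard_of_rel (fun x t => R.Incid x t)
    (fun x hx => ⟨R.join (ne_D_of_incid_s15 hg hx), incid_join_right _, incid_join_left _⟩)
    (fun t ht => ?_) (fun x hx x' hx' t ht hxt hx't => ?_) (fun t ht t' ht' x hx hxt hxt' => ?_)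
  · obtain ⟨x, hxt, hxg⟩ := exists_incid_special ht (line_ne_of_not_incid_of_incid hg ht)
    exact ⟨x, hxg, hxt⟩
  · exact point_eq_of_incid_s15 (line_ne_of_not_incid_of_incid hg ht) hx hxt hx' hx't
  · exact line_eq_of_incid_s15 (ne_D_of_incid_s15 hg hx) hxt ht hxt' ht'

theorem finite_incid_of_not_incid_D (h : R.HasOrder m n) (hg : ¬R.Incid R.D g) :
    {x | R.Incid x g}.Finite :=
  Set.finite_of_ncard_ne_zero (by rw [ncard_incid_of_not_incid_D h hg]; omega)

def pointsOff (R : ProjRect Point Line) (g s : Line) : Set Point :=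
  {x | R.Incid x g ∧ ¬R.Incid x s}

theorem ncard_pointsOff (h : R.HasOrder m n) (hg : ¬R.Incid R.D g) (hs : R.Incid R.D s) :
    (R.pointsOff g s).ncard = m := by
  obtain ⟨p, hps, hpg⟩ := exists_incid_special hs (line_ne_of_not_incid_of_incid hg hs)
  have : R.pointsOff g s = {x | R.Incid x g} \ {p} := by
    ext x
    refine ⟨fun ⟨hxg, hxs⟩ => ⟨hxg, fun e => hxs (e ▸ hps)⟩, fun ⟨hxg, hxp⟩ => ⟨hxg, ?_⟩⟩
    exact fun hxs => hxp (point_eq_of_incid_s15 (line_ne_of_not_incid_of_incid hg hs) hxg hxs hpg hps)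
  rw [this, Set.ncard_sdiff_singleton_of_mem (show p ∈ {x | R.Incid x g} from hpg),
    ncard_incid_of_not_incid_D h hg]
  rfl

theorem two_le_of_hasOrder (h : R.HasOrder m n) (hg : ¬R.Incid R.D g) : 2 ≤ m := by
  obtain ⟨a, b, c, hab, hac, hbc, ha, hb, hc⟩ := R.A3 g
  have h3 : ({a, b, c} : Set Point).ncard ≤ {x | R.Incid x g}.ncard := by
    refine Set.ncard_le_ncard ?_ (finite_incid_of_not_incid_D h hg)
    rintro x (rfl | rfl | rfl) <;> assumption
  rw [Set.ncard_eq_three.mpr ⟨a, b, c, hab, hac, hbc, rfl⟩, ncard_incid_of_not_incid_D h hg] at h3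
  omega

def punctured (R : ProjRect Point Line) (s l : Line) : Set Point :=
  {x | R.Incid x s ∧ x ≠ R.D ∧ ¬R.Incid x l}

theorem ncard_inter_punctured (hl : ¬R.Incid R.D l) (hs : R.Incid R.D s) {T : Set Point}
    (hDT : R.D ∈ T) (hlT : ∀ x, R.Incid x l → x ∈ T) :
    (T ∩ R.punctured s l).ncard = {x ∈ T | R.Incid x s}.ncard - 2 := by
  obtain ⟨p, hps, hpl⟩ := exists_incid_special hs (line_ne_of_not_incid_of_incid hl hs)
  have : T ∩ R.punctured s l = ({x ∈ T | R.Incid x s} \ {R.D}) \ {p} := by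
    ext x
    simp only [Set.mem_inter_iff, Set.mem_sdiff, Set.mem_singleton_iff]
    refine ⟨fun ⟨hxT, hxs, hxD, hxl⟩ => ⟨⟨⟨hxT, hxs⟩, hxD⟩, fun e => hxl (e ▸ hpl)⟩,
      fun ⟨⟨⟨hxT, hxs⟩, hxD⟩, hxp⟩ => ⟨hxT, hxs, hxD, fun hxl => hxp ?_⟩⟩
    exact point_eq_of_incid_s15 (line_ne_of_not_incid_of_incid hl hs) hxl hxs hpl hps
  rw [this, Set.ncard_sdiff_singleton_of_mem (show p ∈ {x ∈ T | R.Incid x s} \ {R.D} from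
      ⟨⟨hlT p hpl, hps⟩, ne_D_of_incid_s15 hl hpl⟩),
    Set.ncard_sdiff_singleton_of_mem (show R.D ∈ {x ∈ T | R.Incid x s} from ⟨hDT, hs⟩)]
  omega

theorem finite_punctured (h : R.HasOrder m n) (hs : R.Incid R.D s) : (R.punctured s l).Finite :=
  (Set.finite_of_ncard_ne_zero (by rw [h.2 s hs]; omega) : {x | R.Incid x s}.Finite).subset
    fun _ => And.left

theorem ncard_punctured (h : R.HasOrder m n) (hl : ¬R.Incid R.D l) (hs : R.Incid R.D s) :
    (R.punctured s l).ncard = n - 1 := by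
  have := ncard_inter_punctured hl hs (Set.mem_univ R.D) fun x _ => Set.mem_univ x
  rw [Set.univ_inter, Set.sep_univ, h.2 s hs] at this
  omega

def joins (R : ProjRect Point Line) (P : Set Point) : Set Line :=
  {g | ∃ u ∈ P, ∃ v ∈ P, u ≠ v ∧ R.Incid u g ∧ R.Incid v g}

namespace IsSubplane

variable {P : Set Point} {L : Set Line} (hP : R.IsSubplane P L)
include hP

theorem join_mem (hx : x ∈ P) (hy : y ∈ P) (hxy : x ≠ y) : R.join hxy ∈ L := by
  obtain ⟨g, ⟨hgL, hxg, hyg⟩, -⟩ := hP.1 x y hx hy hxy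
  exact eq_join hxy hxg hyg ▸ hgL

theorem line_mem (hx : x ∈ P) (hy : y ∈ P) (hxy : x ≠ y) (hxg : R.Incid x g)
    (hyg : R.Incid y g) : g ∈ L :=
  eq_join hxy hxg hyg ▸ hP.join_mem hx hy hxy

/-- The two points are the meets of `g` with the sides `ab` and `ac`. -/
theorem mem_joins_of_triangle (hg : g ∈ L) (ha : a ∈ P) (hb : b ∈ P) (hc : c ∈ P)
    (hab : a ≠ b) (hac : a ≠ c) (habc : ∀ k ∈ L, ¬(R.Incid a k ∧ R.Incid b k ∧ R.Incid c k))
    (hag : ¬R.Incid a g) : g ∈ R.joins P := by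
  obtain ⟨x, hxP, hxb, hxg⟩ :=
    hP.2.1 _ _ (hP.join_mem ha hb hab) hg fun e => hag (e ▸ incid_join_left hab)
  obtain ⟨y, hyP, hyc, hyg⟩ :=
    hP.2.1 _ _ (hP.join_mem ha hc hac) hg fun e => hag (e ▸ incid_join_left hac)
  refine ⟨x, hxP, y, hyP, fun hxy => ?_, hxg, hyg⟩
  subst hxy
  have hne : R.join hab ≠ R.join hac := fun e => habc _ (hP.join_mem ha hb hab)
    ⟨incid_join_left hab, incid_join_right hab, e ▸ incid_join_right hac⟩
  exact hag (point_eq_of_incid_s15 hne hxb hyc (incid_join_left hab) (incid_join_left hac) ▸ hxg)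

theorem lines_eq_joins : L = R.joins P := by
  refine Set.ext fun g => ⟨fun hg => ?_, fun ⟨u, hu, v, hv, huv, hug, hvg⟩ =>
    hP.line_mem hu hv huv hug hvg⟩
  obtain ⟨a, b, c, -, ha, hb, hc, -, hab, hac, -, hbc, -, -, habc, -⟩ := hP.2.2
  by_cases hag : R.Incid a g
  · by_cases hbg : R.Incid b g
    · refine hP.mem_joins_of_triangle hg hc ha hb hac.symm hbc.symm (fun k hk h => ?_) ?_
      · exact habc k hk ⟨h.2.1, h.2.2, h.1⟩
      · exact fun hcg => habc g hg ⟨hag, hbg, hcg⟩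
    · refine hP.mem_joins_of_triangle hg hb ha hc hab.symm hbc (fun k hk h => ?_) hbg
      exact habc k hk ⟨h.2.1, h.1, h.2.2⟩
  · exact hP.mem_joins_of_triangle hg ha hb hc hab hac habc hag

theorem exists_not_incid_ne (hg : g ∈ L) (z : Point) : ∃ x ∈ P, ¬R.Incid x g ∧ x ≠ z := by
  obtain ⟨a, b, c, d, ha, hb, hc, hd, hab, hac, had, hbc, hbd, hcd, habc, habd, hacd, hbcd⟩ :=
    hP.2.2
  have two_off : ∃ u ∈ P, ∃ v ∈ P, u ≠ v ∧ ¬R.Incid u g ∧ ¬R.Incid v g := by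
    by_cases hag : R.Incid a g
    · by_cases hbg : R.Incid b g
      · exact ⟨c, hc, d, hd, hcd, fun h => habc g hg ⟨hag, hbg, h⟩,
          fun h => habd g hg ⟨hag, hbg, h⟩⟩
      by_cases hcg : R.Incid c g
      · exact ⟨b, hb, d, hd, hbd, hbg, fun h => hacd g hg ⟨hag, hcg, h⟩⟩
      · exact ⟨b, hb, c, hc, hbc, hbg, hcg⟩
    by_cases hbg : R.Incid b g
    · by_cases hcg : R.Incid c g
      · exact ⟨a, ha, d, hd, had, hag, fun h => hbcd g hg ⟨hbg, hcg, h⟩⟩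
      · exact ⟨a, ha, c, hc, hac, hag, hcg⟩
    · exact ⟨a, ha, b, hb, hab, hag, hbg⟩
  obtain ⟨u, hu, v, hv, huv, hug, hvg⟩ := two_off
  by_cases huz : u = z
  · exact ⟨v, hv, hvg, fun e => huv (huz.trans e.symm)⟩
  · exact ⟨u, hu, hug, huz⟩

end IsSubplane

section FullSubplane

variable {P : Set Point} {L : Set Line} (hl : ¬R.Incid R.D l) (hP : R.IsSubplane P L)
  (hF : R.IsFull P L) (hlL : l ∈ L)
include hl hP hF hlL

theorem IsFull.exists_mem_incid_ne (hx : x ∈ P) (hxl : ¬R.Incid x l) (ha : R.Incid a l)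
    (hk : ¬R.Incid R.D k) (hxk : R.Incid x k) (hak : R.Incid a k) :
    ∃ y ∈ P, R.Incid y k ∧ y ≠ x ∧ ¬R.Incid y l := by
  have hxa : x ≠ a := fun e => hxl (e ▸ ha)
  obtain ⟨y, hyk, hyx, hya⟩ := R.exists_incid_ne k x a
  have hkL : k ∈ L := hP.line_mem hx (hF l hlL hl a ha) hxa hxk hak
  refine ⟨y, hF k hkL hk y hyk, hyk, hyx, fun hyl => hya ?_⟩
  exact point_eq_of_incid_s15 (show k ≠ l from fun e => hxl (e ▸ hxk)) hyk hyl hak ha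

theorem IsFull.join_D_mem (hx : x ∈ P) (hxl : ¬R.Incid x l) (hxD : x ≠ R.D) :
    R.join hxD ∈ L := by
  obtain ⟨p, hpt, hpl⟩ := exists_incid_special (incid_join_right hxD)
    (line_ne_of_not_incid_of_incid hl (incid_join_right hxD))
  exact hP.line_mem hx (hF l hlL hl p hpl) (fun e => hxl (e ▸ hpl)) (incid_join_left hxD) hpt

/-- Two special lines of the subplane meet in `D`. -/
theorem IsFull.D_mem : R.D ∈ P := by
  obtain ⟨x, hxP, hxl, hxD⟩ := hP.exists_not_incid_ne hlL R.D
  have hDt : R.Incid R.D (R.join hxD) := incid_join_right hxD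
  obtain ⟨a, -, -, hal, -, hat, -⟩ := exists_two_incid_not_incid hl hDt
  have hxa : x ≠ a := fun e => hxl (e ▸ hal)
  have hk : ¬R.Incid R.D (R.join hxa) := fun hD => hat <|
    line_eq_of_incid_s15 hxD (incid_join_left hxa) hD (incid_join_left hxD) hDt ▸ incid_join_right hxa
  obtain ⟨y, hyP, hyk, hyx, hyl⟩ := hF.exists_mem_incid_ne hl hP hlL hxP hxl hal hk
    (incid_join_left hxa) (incid_join_right hxa)
  have hyD := ne_D_of_incid_s15 hk hyk
  have hne : R.join hyD ≠ R.join hxD := fun e => hyx <|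
    point_eq_of_incid_s15 (line_ne_of_not_incid_of_incid hk hDt) hyk (e ▸ incid_join_left hyD)
      (incid_join_left hxa) (incid_join_left hxD)
  obtain ⟨w, hwP, hwy, hwx⟩ :=
    hP.2.1 _ _ (hF.join_D_mem hl hP hlL hyP hyl hyD) (hF.join_D_mem hl hP hlL hxP hxl hxD) hne
  rwa [point_eq_of_incid_s15 hne hwy hwx (incid_join_right hyD) hDt] at hwP

theorem IsFull.special_mem (hs : R.Incid R.D s) : s ∈ L := by
  obtain ⟨p, hps, hpl⟩ := exists_incid_special hs (line_ne_of_not_incid_of_incid hl hs)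
  exact hP.line_mem (hF l hlL hl p hpl) (hF.D_mem hl hP hlL) (ne_D_of_incid_s15 hl hpl) hps hs

theorem IsFull.exists_mem_not_incid_not_incid (hs : R.Incid R.D s) :
    ∃ c ∈ P, ¬R.Incid c l ∧ ¬R.Incid c s := by
  obtain ⟨x, hxP, hxl, hxD⟩ := hP.exists_not_incid_ne hlL R.D
  by_cases hxs : R.Incid x s
  swap
  · exact ⟨x, hxP, hxl, hxs⟩
  obtain ⟨a, -, -, hal, -, has, -⟩ := exists_two_incid_not_incid hl hs
  have hxa : x ≠ a := fun e => has (e ▸ hxs)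
  have hk : ¬R.Incid R.D (R.join hxa) := fun hD => has <|
    line_eq_of_incid_s15 hxD (incid_join_left hxa) hD hxs hs ▸ incid_join_right hxa
  obtain ⟨y, hyP, hyk, hyx, hyl⟩ := hF.exists_mem_incid_ne hl hP hlL hxP hxl hal hk
    (incid_join_left hxa) (incid_join_right hxa)
  exact ⟨y, hyP, hyl, fun hys => hyx <|
    point_eq_of_incid_s15 (line_ne_of_not_incid_of_incid hk hs) hyk hys (incid_join_left hxa) hxs⟩

/-- Projection from a point of the subplane off `l` and `s` matches the points of `l` with the
points of the subplane on `s`. -/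
theorem IsFull.ncard_mem_incid (h : R.HasOrder m n) (hs : R.Incid R.D s) :
    {x ∈ P | R.Incid x s}.ncard = m + 1 := by
  obtain ⟨c, hcP, hcl, hcs⟩ := hF.exists_mem_not_incid_not_incid hl hP hlL hs
  have hsL := hF.special_mem hl hP hlL hs
  rw [← ncard_incid_of_not_incid_D h hl]
  refine (Set.ncard_eq_ncard_of_rel (fun a x => R.Collinear c a x) (fun a ha => ?_) (fun x hx => ?_)
    (fun a ha a' ha' x hx hax ha'x => ?_) (fun x hx x' hx' a ha hax hax' => ?_)).symm
  · have hca : c ≠ a := fun e => hcl (e ▸ ha)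
    obtain ⟨x, hxP, hxk, hxs⟩ := hP.2.1 _ _ (hP.join_mem hcP (hF l hlL hl a ha) hca) hsL
      fun e => hcs (e ▸ incid_join_left hca)
    exact ⟨x, ⟨hxP, hxs⟩, R.join hca, incid_join_left hca, incid_join_right hca, hxk⟩
  · have hcx : c ≠ x := fun e => hcs (e ▸ hx.2)
    obtain ⟨a, -, hak, hal⟩ := hP.2.1 _ _ (hP.join_mem hcP hx.1 hcx) hlL
      fun e => hcl (e ▸ incid_join_left hcx)
    exact ⟨a, hal, R.join hcx, incid_join_left hcx, hak, incid_join_right hcx⟩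
  · exact eq_of_collinear (point_ne_of_incid_of_not_incid hx.2 hcs).symm hcl ha ha' hax.swap
      ha'x.swap
  · exact eq_of_collinear (point_ne_of_incid_of_not_incid ha hcl).symm hcs hx.2 hx'.2 hax hax'

theorem IsFull.ncard_inter_punctured (h : R.HasOrder m n) (hs : R.Incid R.D s) :
    (P ∩ R.punctured s l).ncard = m - 1 := by
  rw [ProjRect.ncard_inter_punctured hl hs (hF.D_mem hl hP hlL) (hF l hlL hl),
    hF.ncard_mem_incid hl hP hlL h hs]
  omega

end FullSubplane

/-- For `q` on the special line `s`, the full subplane through `l` and `q` consists of `D`, `q`,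
the points of `l`, the points off `s` whose join with `q` meets `l` (`conePoints`), and the points
of `s` on a line joining two of those (`tracePoints`). -/
def conePoints (R : ProjRect Point Line) (l s : Line) (q : Point) : Set Point :=
  {x | ¬R.Incid x s ∧ ∃ a, R.Incid a l ∧ R.Collinear q x a}

def tracePoints (R : ProjRect Point Line) (l s : Line) (q : Point) : Set Point :=
  {z | R.Incid z s ∧ ∃ u ∈ R.conePoints l s q, ∃ v ∈ R.conePoints l s q, u ≠ v ∧ R.Collinear z u v}

def subplanePoints (R : ProjRect Point Line) (l s : Line) (q : Point) : Set Point :=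
  insert R.D (insert q ({x | R.Incid x l} ∪ R.conePoints l s q ∪ R.tracePoints l s q))

def subplane (R : ProjRect Point Line) (l s : Line) (q : Point) : Set Point × Set Line :=
  (R.subplanePoints l s q, R.joins (R.subplanePoints l s q))

theorem D_mem_subplanePoints : R.D ∈ R.subplanePoints l s q := Set.mem_insert _ _

theorem q_mem_subplanePoints : q ∈ R.subplanePoints l s q :=
  Set.mem_insert_of_mem _ (Set.mem_insert _ _)

theorem mem_subplanePoints_of_incid (hx : R.Incid x l) : x ∈ R.subplanePoints l s q :=
  Or.inr (Or.inr (Or.inl (Or.inl hx)))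

theorem mem_subplanePoints_of_mem_conePoints (hx : x ∈ R.conePoints l s q) :
    x ∈ R.subplanePoints l s q :=
  Or.inr (Or.inr (Or.inl (Or.inr hx)))

theorem mem_subplanePoints_of_mem_tracePoints (hx : x ∈ R.tracePoints l s q) :
    x ∈ R.subplanePoints l s q :=
  Or.inr (Or.inr (Or.inr hx))

theorem l_mem_subplane : l ∈ (R.subplane l s q).2 := by
  obtain ⟨a, b, -, hab, -, -, ha, hb, -⟩ := R.A3 l
  exact ⟨a, mem_subplanePoints_of_incid ha, b, mem_subplanePoints_of_incid hb, hab, ha, hb⟩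

structure IsFrame (R : ProjRect Point Line) (l s : Line) (q : Point) : Prop where
  not_incid_D_l : ¬R.Incid R.D l
  incid_D_s : R.Incid R.D s
  incid_q_s : R.Incid q s
  q_ne_D : q ≠ R.D
  not_incid_q_l : ¬R.Incid q l

namespace IsFrame

variable (F : R.IsFrame l s q)
include F

theorem l_ne_s : l ≠ s := line_ne_of_not_incid_of_incid F.not_incid_D_l F.incid_D_s

theorem q_ne_of_incid (ha : R.Incid a l) : q ≠ a :=
  (point_ne_of_incid_of_not_incid ha F.not_incid_q_l).symm

theorem not_incid_D_of_incid_q (hqk : R.Incid q k) (hxk : R.Incid x k) (hxs : ¬R.Incid x s) :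
    ¬R.Incid R.D k :=
  fun hD => hxs (line_eq_of_incid_s15 F.q_ne_D hqk hD F.incid_q_s F.incid_D_s ▸ hxk)

theorem eq_q_of_incid (hqk : R.Incid q k) (hxk : R.Incid x k) (hxs : ¬R.Incid x s)
    (hyk : R.Incid y k) (hys : R.Incid y s) : y = q :=
  point_eq_of_incid_s15 (line_ne_of_not_incid_of_incid hxs hxk) hys hyk F.incid_q_s hqk

theorem exists_of_mem_conePoints (hx : x ∈ R.conePoints l s q) :
    ∃ a k, R.Incid a l ∧ ¬R.Incid a s ∧ R.Incid q k ∧ R.Incid x k ∧ R.Incid a k ∧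
      ¬R.Incid R.D k := by
  obtain ⟨hxs, a, hal, k, hqk, hxk, hak⟩ := hx
  refine ⟨a, k, hal, fun has => F.not_incid_q_l ?_, hqk, hxk, hak,
    F.not_incid_D_of_incid_q hqk hxk hxs⟩
  exact F.eq_q_of_incid hqk hxk hxs hak has ▸ hal

theorem mem_conePoints_of_incid (ha : R.Incid a l) (has : ¬R.Incid a s) :
    a ∈ R.conePoints l s q :=
  ⟨has, a, ha, R.join (F.q_ne_of_incid ha), incid_join_left _, incid_join_right _,
    incid_join_right _⟩

theorem mem_conePoints_of_mem_subplanePoints (hx : x ∈ R.subplanePoints l s q)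
    (hxs : ¬R.Incid x s) : x ∈ R.conePoints l s q := by
  rcases hx with rfl | rfl | (hxl | hxo) | hxt
  · exact absurd F.incid_D_s hxs
  · exact absurd F.incid_q_s hxs
  · exact F.mem_conePoints_of_incid hxl hxs
  · exact hxo
  · exact absurd hxt.1 hxs

/-- Perspectivity with centre `q` between `g \ s` and `l \ s`: as both have `m` points, it is
total on one side iff it is total on the other. -/
theorem pointsOff_subset_conePoints_iff (h : R.HasOrder m n) (hg : ¬R.Incid R.D g)
    (hqg : ¬R.Incid q g) :
    R.pointsOff g s ⊆ R.conePoints l s q ↔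
      ∀ a ∈ R.pointsOff l s, ∃ y, R.Incid y g ∧ R.Collinear q y a := by
  have hcard : (R.pointsOff g s).ncard = (R.pointsOff l s).ncard := by
    rw [ncard_pointsOff h hg F.incid_D_s, ncard_pointsOff h F.not_incid_D_l F.incid_D_s]
  have hfin : ∀ {k}, ¬R.Incid R.D k → (R.pointsOff k s).Finite := fun hk =>
    (finite_incid_of_not_incid_D h hk).subset fun _ => And.left
  constructor
  · intro hoff a ha
    have hex : ∀ y ∈ R.pointsOff g s, ∃ a ∈ R.pointsOff l s, R.Collinear q y a := fun y hy => by
      obtain ⟨a, k, hal, has, hqk, hyk, hak, -⟩ := F.exists_of_mem_conePoints (hoff hy)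
      exact ⟨a, ⟨hal, has⟩, k, hqk, hyk, hak⟩
    obtain ⟨y, ⟨hyg, -⟩, hya⟩ := Set.forall_exists_rel_of_ncard_le (hfin F.not_incid_D_l)
      hcard.ge _ hex (fun y hy y' hy' a ha hya hy'a =>
        eq_of_collinear (F.q_ne_of_incid ha.1) hqg hy.1 hy'.1 hya.swap hy'a.swap) a ha
    exact ⟨y, hyg, hya⟩
  · rintro hmeet y ⟨hyg, hys⟩
    have hex : ∀ a ∈ R.pointsOff l s, ∃ y ∈ R.pointsOff g s, R.Collinear q y a := fun a ha => by
      obtain ⟨y, hyg, k, hqk, hyk, hak⟩ := hmeet a ha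
      exact ⟨y, ⟨hyg, fun hys => hqg (F.eq_q_of_incid hqk hak ha.2 hyk hys ▸ hyg)⟩,
        k, hqk, hyk, hak⟩
    obtain ⟨a, ⟨hal, -⟩, hya⟩ := Set.forall_exists_rel_of_ncard_le (hfin hg) hcard.le _ hex
      (fun a ha a' ha' y hy hya hya' => eq_of_collinear
        (point_ne_of_incid_of_not_incid hy.1 hqg).symm F.not_incid_q_l ha.1 ha'.1 hya hya')
      y ⟨hyg, hys⟩
    exact ⟨hys, a, hal, hya⟩

theorem subset_of_pointsOff_subset (hg : ¬R.Incid R.D g)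
    (hoff : R.pointsOff g s ⊆ R.conePoints l s q) :
    {y | R.Incid y g} ⊆ R.subplanePoints l s q := by
  obtain ⟨u, v, huv, hug, hvg, hus, hvs⟩ := exists_two_incid_not_incid hg F.incid_D_s
  intro y hyg
  by_cases hys : R.Incid y s
  · exact mem_subplanePoints_of_mem_tracePoints
      ⟨hys, u, hoff ⟨hug, hus⟩, v, hoff ⟨hvg, hvs⟩, huv, g, hyg, hug, hvg⟩
  · exact mem_subplanePoints_of_mem_conePoints (hoff ⟨hyg, hys⟩)

/-- Restricted Pasch for the lines `qu` and `qv`. -/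
theorem exists_incid_l_of_mem_conePoints (hqg : ¬R.Incid q g) (hu : u ∈ R.conePoints l s q)
    (hv : v ∈ R.conePoints l s q) (huv : u ≠ v) (hug : R.Incid u g) (hvg : R.Incid v g)
    (hul : ¬R.Incid u l) (hvl : ¬R.Incid v l) : ∃ w, R.Incid w g ∧ R.Incid w l := by
  obtain ⟨a, k, hal, -, hqk, huk, hak, hkD⟩ := F.exists_of_mem_conePoints hu
  obtain ⟨b, k', hbl, -, hqk', hvk', hbk', hk'D⟩ := F.exists_of_mem_conePoints hv
  have hkk' : k ≠ k' := fun e => hqg (line_eq_of_incid_s15 huv hug hvg huk (e ▸ hvk') ▸ hqk)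
  have hab : a ≠ b := fun e =>
    hkk' (line_eq_of_incid_s15 (F.q_ne_of_incid hal) hqk hak hqk' (e ▸ hbk'))
  exact R.A6 k k' g l q u a v b hkD hk'D hkk' hqk hqk' (line_ne_of_not_incid_of_incid hul hug).symm
    huk hug hak hal hvk' hvg hbk' hbl (point_ne_of_incid_of_not_incid hal hul).symm huv
    (point_ne_of_incid_of_not_incid hbl hul).symm (point_ne_of_incid_of_not_incid hal hvl) hab
    (point_ne_of_incid_of_not_incid hbl hvl).symm

/-- Restricted Pasch for the lines `qx` and `g`, which meet `l` and `qy`. -/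
theorem pointsOff_subset_conePoints_of_incid_l (hg : ¬R.Incid R.D g) (hqg : ¬R.Incid q g)
    (hwg : R.Incid w g) (hwl : R.Incid w l) (hx : x ∈ R.conePoints l s q) (hxg : R.Incid x g)
    (hxw : x ≠ w) : R.pointsOff g s ⊆ R.conePoints l s q := by
  rintro y ⟨hyg, hys⟩
  by_cases hyl : R.Incid y l
  · exact F.mem_conePoints_of_incid hyl hys
  by_cases hxl : R.Incid x l
  · exact absurd (line_eq_of_incid_s15 hxw hxg hwg hxl hwl ▸ hyg) hyl
  obtain ⟨a, k, hal, -, hqk, hxk, hak, hkD⟩ := F.exists_of_mem_conePoints hx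
  have hqy : q ≠ y := point_ne_of_incid_of_not_incid F.incid_q_s hys
  have hkg : k ≠ g := line_ne_of_not_incid_of_incid hqg hqk |>.symm
  have haw : a ≠ w := fun e => hxl (point_eq_of_incid_s15 hkg hxk hxg hak (e ▸ hwg) ▸ hal)
  obtain ⟨t, htl, hty⟩ := R.A6 k g l (R.join hqy) x a q w y hkD hg hkg hxk hxg
    (line_ne_of_not_incid_of_incid F.not_incid_q_l (incid_join_left hqy)) hak hal hqk
    (incid_join_left hqy) hwg hwl hyg (incid_join_right hqy) (F.q_ne_of_incid hal).symm haw
    (point_ne_of_incid_of_not_incid hal hyl) (F.q_ne_of_incid hwl) hqy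
    (point_ne_of_incid_of_not_incid hwl hyl)
  exact ⟨hys, t, htl, R.join hqy, incid_join_left hqy, incid_join_right hqy, hty⟩

theorem pointsOff_subset_conePoints_of_two (hg : ¬R.Incid R.D g) (hqg : ¬R.Incid q g)
    (hu : u ∈ R.conePoints l s q) (hv : v ∈ R.conePoints l s q) (huv : u ≠ v)
    (hug : R.Incid u g) (hvg : R.Incid v g) :
    R.pointsOff g s ⊆ R.conePoints l s q := by
  by_cases hul : R.Incid u l
  · exact F.pointsOff_subset_conePoints_of_incid_l hg hqg hug hul hv hvg huv.symm
  by_cases hvl : R.Incid v l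
  · exact F.pointsOff_subset_conePoints_of_incid_l hg hqg hvg hvl hu hug huv
  obtain ⟨w, hwg, hwl⟩ := F.exists_incid_l_of_mem_conePoints hqg hu hv huv hug hvg hul hvl
  exact F.pointsOff_subset_conePoints_of_incid_l hg hqg hwg hwl hu hug
    (point_ne_of_incid_of_not_incid hwl hul).symm

/-- The line `k` carrying the trace point `z` already lies in the subplane, so every line `qa`
meets it; restricted Pasch for `k` and `qb`, where `v` lies on `qb`, then shows that every `qa`
meets `g` as well. -/
theorem pointsOff_subset_conePoints_of_mem_tracePoints (h : R.HasOrder m n) (hg : ¬R.Incid R.D g)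
    (hqg : ¬R.Incid q g) (hz : z ∈ R.tracePoints l s q) (hzg : R.Incid z g)
    (hv : v ∈ R.conePoints l s q) (hvg : R.Incid v g) :
    R.pointsOff g s ⊆ R.conePoints l s q := by
  obtain ⟨hzs, u₁, hu₁, u₂, hu₂, hu₁₂, k, hzk, hu₁k, hu₂k⟩ := hz
  have hzq : z ≠ q := point_ne_of_incid_of_not_incid hzg hqg
  have hks : k ≠ s := (line_ne_of_not_incid_of_incid hu₁.1 hu₁k).symm
  have hkD : ¬R.Incid R.D k := fun hD =>
    ne_D_of_incid_s15 hg hzg (point_eq_of_incid_s15 hks hzk hzs hD F.incid_D_s)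
  have hqk : ¬R.Incid q k := fun hqk => hzq (point_eq_of_incid_s15 hks hzk hzs hqk F.incid_q_s)
  by_cases hvk : R.Incid v k
  · rw [line_eq_of_incid_s15 (point_ne_of_incid_of_not_incid hzs hv.1) hzg hvg hzk hvk]
    exact F.pointsOff_subset_conePoints_of_two hkD hqk hu₁ hu₂ hu₁₂ hu₁k hu₂k
  have hk_meets := (F.pointsOff_subset_conePoints_iff h hkD hqk).1
    (F.pointsOff_subset_conePoints_of_two hkD hqk hu₁ hu₂ hu₁₂ hu₁k hu₂k)
  obtain ⟨b, kb, hbl, hbs, hqkb, hvkb, hbkb, hkbD⟩ := F.exists_of_mem_conePoints hv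
  obtain ⟨t, htk, htb⟩ := hk_meets b ⟨hbl, hbs⟩
  refine (F.pointsOff_subset_conePoints_iff h hg hqg).2 fun a ⟨hal, has⟩ => ?_
  by_cases hab : a = b
  · exact ⟨v, hvg, kb, hqkb, hvkb, hab ▸ hbkb⟩
  obtain ⟨r, hrk, hra⟩ := hk_meets a ⟨hal, has⟩
  have hqa := F.q_ne_of_incid hal
  have hrka := incid_of_collinear hqa hra (incid_join_left hqa) (incid_join_right hqa)
  obtain ⟨y, hyg, hyka⟩ := R.A6 k kb g (R.join hqa) t z r v q hkD hkbD
    (line_ne_of_not_incid_of_incid hqk hqkb) htk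
    (incid_of_collinear (F.q_ne_of_incid hbl) htb hqkb hbkb)
    (line_ne_of_not_incid_of_incid hqg (incid_join_left hqa)) hzk hzg hrk hrka hvkb hvg hqkb
    (incid_join_left hqa)
    (fun e => hzq (F.eq_q_of_incid (incid_join_left hqa) (incid_join_right hqa) has (e ▸ hrka) hzs))
    (point_ne_of_incid_of_not_incid hzs hv.1) hzq
    (point_ne_of_incid_of_not_incid hrk hvk) (point_ne_of_incid_of_not_incid hrk hqk)
    (point_ne_of_incid_of_not_incid hvg hqg)
  exact ⟨y, hyg, R.join hqa, incid_join_left hqa, hyka, incid_join_right hqa⟩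

theorem exists_mem_pointsOff_incid_of_incid_q (hg : ¬R.Incid R.D g) (hqg : R.Incid q g)
    (hgJ : g ∈ R.joins (R.subplanePoints l s q)) : ∃ a ∈ R.pointsOff l s, R.Incid a g := by
  obtain ⟨u, hu, v, hv, huv, hug, hvg⟩ := hgJ
  obtain ⟨w, hw, hwg, hwq⟩ : ∃ w ∈ R.subplanePoints l s q, R.Incid w g ∧ w ≠ q := by
    by_cases huq : u = q
    · exact ⟨v, hv, hvg, fun e => huv (huq.trans e.symm)⟩
    · exact ⟨u, hu, hug, huq⟩
  have hws : ¬R.Incid w s := fun hws =>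
    hg (line_eq_of_incid_s15 hwq hws F.incid_q_s hwg hqg ▸ F.incid_D_s)
  obtain ⟨a, k, hal, has, hqk, hwk, hak, -⟩ :=
    F.exists_of_mem_conePoints (F.mem_conePoints_of_mem_subplanePoints hw hws)
  exact ⟨a, ⟨hal, has⟩, line_eq_of_incid_s15 hwq hwk hqk hwg hqg ▸ hak⟩

theorem pointsOff_subset_conePoints_of_incid_s (h : R.HasOrder m n) (hg : ¬R.Incid R.D g)
    (hqg : ¬R.Incid q g) (hu : u ∈ R.subplanePoints l s q) (hv : v ∈ R.subplanePoints l s q)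
    (huv : u ≠ v) (hug : R.Incid u g) (hvg : R.Incid v g) (hus : R.Incid u s) :
    R.pointsOff g s ⊆ R.conePoints l s q := by
  have hvs : ¬R.Incid v s := fun hvs =>
    hg (line_eq_of_incid_s15 huv hus hvs hug hvg ▸ F.incid_D_s)
  have hv' := F.mem_conePoints_of_mem_subplanePoints hv hvs
  rcases hu with rfl | rfl | (hul | hu') | hut
  · exact absurd hug hg
  · exact absurd hug hqg
  · exact F.pointsOff_subset_conePoints_of_incid_l hg hqg hug hul hv' hvg huv.symm
  · exact absurd hus hu'.1
  · exact F.pointsOff_subset_conePoints_of_mem_tracePoints h hg hqg hut hug hv' hvg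

theorem pointsOff_subset_conePoints_of_mem_joins (h : R.HasOrder m n) (hg : ¬R.Incid R.D g)
    (hgJ : g ∈ R.joins (R.subplanePoints l s q)) :
    R.pointsOff g s ⊆ R.conePoints l s q := by
  by_cases hqg : R.Incid q g
  · obtain ⟨a, ⟨hal, -⟩, hag⟩ := F.exists_mem_pointsOff_incid_of_incid_q hg hqg hgJ
    exact fun y ⟨hyg, hys⟩ => ⟨hys, a, hal, g, hqg, hyg, hag⟩
  obtain ⟨u, hu, v, hv, huv, hug, hvg⟩ := hgJ
  by_cases hus : R.Incid u s
  · exact F.pointsOff_subset_conePoints_of_incid_s h hg hqg hu hv huv hug hvg hus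
  by_cases hvs : R.Incid v s
  · exact F.pointsOff_subset_conePoints_of_incid_s h hg hqg hv hu huv.symm hvg hug hvs
  exact F.pointsOff_subset_conePoints_of_two hg hqg
    (F.mem_conePoints_of_mem_subplanePoints hu hus) (F.mem_conePoints_of_mem_subplanePoints hv hvs)
    huv hug hvg

theorem subset_of_mem_joins (h : R.HasOrder m n) (hg : ¬R.Incid R.D g)
    (hgJ : g ∈ R.joins (R.subplanePoints l s q)) : {y | R.Incid y g} ⊆ R.subplanePoints l s q :=
  F.subset_of_pointsOff_subset hg (F.pointsOff_subset_conePoints_of_mem_joins h hg hgJ)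

theorem exists_incid_incid_of_incid_q (h : R.HasOrder m n) (hg : ¬R.Incid R.D g)
    (hg' : ¬R.Incid R.D g') (hgJ : g ∈ R.joins (R.subplanePoints l s q))
    (hg'J : g' ∈ R.joins (R.subplanePoints l s q)) (hqg : R.Incid q g) (hqg' : ¬R.Incid q g') :
    ∃ y, R.Incid y g ∧ R.Incid y g' := by
  obtain ⟨a, ha, hag⟩ := F.exists_mem_pointsOff_incid_of_incid_q hg hqg hgJ
  obtain ⟨y, hyg', hya⟩ := (F.pointsOff_subset_conePoints_iff h hg' hqg').1
    (F.pointsOff_subset_conePoints_of_mem_joins h hg' hg'J) a ha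
  exact ⟨y, incid_of_collinear (F.q_ne_of_incid ha.1) hya hqg hag, hyg'⟩

/-- Restricted Pasch for the lines `qx` and `qx'`, with `x, x'` on `g` and both lines meeting
`g'`. -/
theorem exists_incid_incid_of_not_incid_q (h : R.HasOrder m n) (hg : ¬R.Incid R.D g)
    (hg' : ¬R.Incid R.D g') (hgJ : g ∈ R.joins (R.subplanePoints l s q))
    (hg'J : g' ∈ R.joins (R.subplanePoints l s q)) (hqg : ¬R.Incid q g)
    (hqg' : ¬R.Incid q g') (hne : g ≠ g') : ∃ y, R.Incid y g ∧ R.Incid y g' := by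
  have hgP := F.subset_of_mem_joins h hg hgJ
  obtain ⟨x, x', hxx', hxg, hx'g, hxs, hx's⟩ := exists_two_incid_not_incid hg F.incid_D_s
  by_cases hxg' : R.Incid x g'
  · exact ⟨x, hxg, hxg'⟩
  by_cases hx'g' : R.Incid x' g'
  · exact ⟨x', hx'g, hx'g'⟩
  have hg'_meets := (F.pointsOff_subset_conePoints_iff h hg' hqg').1
    (F.pointsOff_subset_conePoints_of_mem_joins h hg' hg'J)
  obtain ⟨a, k, hal, has, hqk, hxk, hak, hkD⟩ :=
    F.exists_of_mem_conePoints (F.mem_conePoints_of_mem_subplanePoints (hgP hxg) hxs)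
  obtain ⟨a', k', ha'l, ha's, hqk', hx'k', ha'k', hk'D⟩ :=
    F.exists_of_mem_conePoints (F.mem_conePoints_of_mem_subplanePoints (hgP hx'g) hx's)
  obtain ⟨y, hyg', hya⟩ := hg'_meets a ⟨hal, has⟩
  obtain ⟨y', hy'g', hy'a'⟩ := hg'_meets a' ⟨ha'l, ha's⟩
  have hyk := incid_of_collinear (F.q_ne_of_incid hal) hya hqk hak
  have hy'k' := incid_of_collinear (F.q_ne_of_incid ha'l) hy'a' hqk' ha'k'
  have hkk' : k ≠ k' := fun e => hqg (line_eq_of_incid_s15 hxx' hxg hx'g hxk (e ▸ hx'k') ▸ hqk)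
  exact R.A6 k k' g g' q x y x' y' hkD hk'D hkk' hqk hqk' hne hxk hxg hyk hyg' hx'k' hx'g hy'k'
    hy'g' (point_ne_of_incid_of_not_incid hyg' hxg').symm hxx'
    (point_ne_of_incid_of_not_incid hy'g' hxg').symm (point_ne_of_incid_of_not_incid hyg' hx'g')
    (fun e => hqg' (point_eq_of_incid_s15 hkk' hyk (e ▸ hy'k') hqk hqk' ▸ hyg'))
    (point_ne_of_incid_of_not_incid hy'g' hx'g').symm

theorem exists_mem_incid_incid (h : R.HasOrder m n)
    (hgJ : g ∈ R.joins (R.subplanePoints l s q)) (hg'J : g' ∈ R.joins (R.subplanePoints l s q))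
    (hne : g ≠ g') : ∃ x ∈ R.subplanePoints l s q, R.Incid x g ∧ R.Incid x g' := by
  by_cases hgD : R.Incid R.D g
  · by_cases hg'D : R.Incid R.D g'
    · exact ⟨R.D, D_mem_subplanePoints, hgD, hg'D⟩
    obtain ⟨x, hxg, hxg'⟩ := exists_incid_special hgD hne.symm
    exact ⟨x, F.subset_of_mem_joins h hg'D hg'J hxg', hxg, hxg'⟩
  suffices ∃ x, R.Incid x g ∧ R.Incid x g' by
    obtain ⟨x, hxg, hxg'⟩ := this
    exact ⟨x, F.subset_of_mem_joins h hgD hgJ hxg, hxg, hxg'⟩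
  by_cases hg'D : R.Incid R.D g'
  · obtain ⟨x, hxg', hxg⟩ := exists_incid_special hg'D hne
    exact ⟨x, hxg, hxg'⟩
  by_cases hqg : R.Incid q g
  · by_cases hqg' : R.Incid q g'
    · exact ⟨q, hqg, hqg'⟩
    exact F.exists_incid_incid_of_incid_q h hgD hg'D hgJ hg'J hqg hqg'
  by_cases hqg' : R.Incid q g'
  · obtain ⟨x, hxg', hxg⟩ := F.exists_incid_incid_of_incid_q h hg'D hgD hg'J hgJ hqg' hqg
    exact ⟨x, hxg, hxg'⟩
  exact F.exists_incid_incid_of_not_incid_q h hgD hg'D hgJ hg'J hqg hqg' hne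

theorem isSubplane_subplane (h : R.HasOrder m n) :
    R.IsSubplane (R.subplane l s q).1 (R.subplane l s q).2 := by
  refine ⟨fun u v hu hv huv => ⟨R.join huv, ⟨⟨u, hu, v, hv, huv, incid_join_left huv,
    incid_join_right huv⟩, incid_join_left huv, incid_join_right huv⟩,
    fun g ⟨_, hug, hvg⟩ => eq_join huv hug hvg⟩,
    fun g g' hg hg' hne => F.exists_mem_incid_incid h hg hg' hne, ?_⟩
  -- the quadrangle `D, a, u, p` with `a ∈ l \ s`, `p ∈ l ∩ s` and `u` a third point of `qa`
  obtain ⟨p, hps, hpl⟩ := exists_incid_special F.incid_D_s F.l_ne_s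
  obtain ⟨a, -, -, hal, -, has, -⟩ := exists_two_incid_not_incid F.not_incid_D_l F.incid_D_s
  have hqa := F.q_ne_of_incid hal
  obtain ⟨u, huk, huq, hua⟩ := R.exists_incid_ne (R.join hqa) q a
  have hkD := F.not_incid_D_of_incid_q (incid_join_left hqa) (incid_join_right hqa) has
  have hus : ¬R.Incid u s := fun hus =>
    huq (F.eq_q_of_incid (incid_join_left hqa) (incid_join_right hqa) has huk hus)
  have hkl : R.join hqa ≠ l :=
    (line_ne_of_not_incid_of_incid F.not_incid_q_l (incid_join_left hqa)).symm
  have hul : ¬R.Incid u l := fun hul =>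
    hua (point_eq_of_incid_s15 hkl huk hul (incid_join_right hqa) hal)
  have hap : a ≠ p := point_ne_of_incid_of_not_incid hps has |>.symm
  have on_k : ∀ {g}, R.Incid a g → R.Incid u g → g = R.join hqa := fun hag hug =>
    line_eq_of_incid_s15 hua.symm hag hug (incid_join_right hqa) huk
  refine ⟨R.D, a, u, p, D_mem_subplanePoints, mem_subplanePoints_of_incid hal,
    mem_subplanePoints_of_mem_conePoints ⟨hus, a, hal, R.join hqa, incid_join_left hqa, huk,
      incid_join_right hqa⟩, mem_subplanePoints_of_incid hpl,
    (ne_D_of_incid_s15 F.not_incid_D_l hal).symm, (point_ne_of_incid_of_not_incid F.incid_D_s hus),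
    (ne_D_of_incid_s15 F.not_incid_D_l hpl).symm, hua.symm, hap,
    point_ne_of_incid_of_not_incid hps hus |>.symm, ?_, ?_, ?_, ?_⟩
  · exact fun g _ ⟨hDg, hag, hug⟩ => hkD (on_k hag hug ▸ hDg)
  · exact fun g _ ⟨hDg, hag, hpg⟩ => F.not_incid_D_l (line_eq_of_incid_s15 hap hag hpg hal hpl ▸ hDg)
  · exact fun g _ ⟨hDg, hug, hpg⟩ => hus (line_eq_of_incid_s15
      (ne_D_of_incid_s15 F.not_incid_D_l hpl).symm hDg hpg F.incid_D_s hps ▸ hug)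
  · exact fun g _ ⟨hag, hug, hpg⟩ => hap (point_eq_of_incid_s15 hkl (on_k hag hug ▸ hpg) hpl
      (incid_join_right hqa) hal).symm

theorem isFull_subplane (h : R.HasOrder m n) :
    R.IsFull (R.subplane l s q).1 (R.subplane l s q).2 :=
  fun _ hgJ hg _ hy => F.subset_of_mem_joins h hg hgJ hy

end IsFrame

theorem IsSubplane.mem_conePoints {P : Set Point} {L : Set Line} (hP : R.IsSubplane P L)
    (hlL : l ∈ L) (F : R.IsFrame l s q) (hqP : q ∈ P) {x : Point} (hxP : x ∈ P)
    (hxs : ¬R.Incid x s) :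
    x ∈ R.conePoints l s q := by
  have hqx : q ≠ x := point_ne_of_incid_of_not_incid F.incid_q_s hxs
  obtain ⟨w, -, hwk, hwl⟩ := hP.2.1 _ _ (hP.join_mem hqP hxP hqx) hlL
    (line_ne_of_not_incid_of_incid F.not_incid_q_l (incid_join_left hqx)).symm
  exact ⟨hxs, w, hwl, R.join hqx, incid_join_left hqx, incid_join_right hqx, hwk⟩

section Uniqueness

variable {P : Set Point} {L : Set Line} (hP : R.IsSubplane P L) (hF : R.IsFull P L) (hlL : l ∈ L)
  (F : R.IsFrame l s q) (hqP : q ∈ P)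
include hP hF hlL F hqP

theorem IsFull.conePoints_subset : R.conePoints l s q ⊆ P := fun x hx => by
  obtain ⟨a, k, hal, -, hqk, hxk, hak, hkD⟩ := F.exists_of_mem_conePoints hx
  exact hF k (hP.line_mem hqP (hF l hlL F.not_incid_D_l a hal) (F.q_ne_of_incid hal) hqk hak) hkD
    x hxk

theorem IsFull.subset_subplanePoints : P ⊆ R.subplanePoints l s q := by
  intro x hxP
  by_cases hxs : R.Incid x s
  swap
  · exact mem_subplanePoints_of_mem_conePoints (hP.mem_conePoints hlL F hqP hxP hxs)
  by_cases hxD : x = R.D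
  · exact hxD ▸ D_mem_subplanePoints
  by_cases hxq : x = q
  · exact hxq ▸ q_mem_subplanePoints
  by_cases hxl : R.Incid x l
  · exact mem_subplanePoints_of_incid hxl
  obtain ⟨a, -, -, hal, -, has, -⟩ := exists_two_incid_not_incid F.not_incid_D_l F.incid_D_s
  have hxa : x ≠ a := point_ne_of_incid_of_not_incid hxs has
  have hkD : ¬R.Incid R.D (R.join hxa) := fun hD =>
    has (line_eq_of_incid_s15 hxD (incid_join_left hxa) hD hxs F.incid_D_s ▸ incid_join_right hxa)
  obtain ⟨v, hvP, hvk, hvx, hvl⟩ := hF.exists_mem_incid_ne F.not_incid_D_l hP hlL hxP hxl hal hkD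
    (incid_join_left hxa) (incid_join_right hxa)
  have hvs : ¬R.Incid v s := fun hvs => hvx <| point_eq_of_incid_s15
    (line_ne_of_not_incid_of_incid hkD F.incid_D_s) hvk hvs (incid_join_left hxa) hxs
  exact mem_subplanePoints_of_mem_tracePoints ⟨hxs, a, F.mem_conePoints_of_incid hal has, v,
    hP.mem_conePoints hlL F hqP hvP hvs, point_ne_of_incid_of_not_incid hal hvl, R.join hxa,
    incid_join_left hxa, incid_join_right hxa, hvk⟩

theorem IsFull.eq_subplanePoints : P = R.subplanePoints l s q := by
  refine (hF.subset_subplanePoints hP hlL F hqP).antisymm ?_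
  have hDP := hF.D_mem F.not_incid_D_l hP hlL
  have hoff := hF.conePoints_subset hP hlL F hqP
  rintro x (rfl | rfl | (hxl | hxo) | ⟨hxs, u, hu, v, hv, huv, k, hxk, huk, hvk⟩)
  · exact hDP
  · exact hqP
  · exact hF l hlL F.not_incid_D_l x hxl
  · exact hoff hxo
  by_cases hxD : x = R.D
  · exact hxD ▸ hDP
  have hkD : ¬R.Incid R.D k := fun hD => hu.1 (line_eq_of_incid_s15 hxD hxk hD hxs F.incid_D_s ▸ huk)
  exact hF k (hP.line_mem (hoff hu) (hoff hv) huv huk hvk) hkD x hxk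

end Uniqueness

theorem IsFull.eq_subplane {π : Set Point × Set Line} (hP : R.IsSubplane π.1 π.2)
    (hF : R.IsFull π.1 π.2) (hlL : l ∈ π.2) (F : R.IsFrame l s q) (hqP : q ∈ π.1) :
    π = R.subplane l s q := by
  have hpts := hF.eq_subplanePoints hP hlL F hqP
  exact Prod.ext hpts (hP.lines_eq_joins.trans (by rw [hpts]; rfl))

theorem image_subplane (h : R.HasOrder m n) (hl : ¬R.Incid R.D l) (hs : R.Incid R.D s) :
    (R.subplane l s ·) '' R.punctured s l =
      {π | R.IsSubplane π.1 π.2 ∧ R.IsFull π.1 π.2 ∧ l ∈ π.2} := by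
  ext π
  constructor
  · rintro ⟨q, ⟨hqs, hqD, hql⟩, rfl⟩
    have F : R.IsFrame l s q := ⟨hl, hs, hqs, hqD, hql⟩
    exact ⟨F.isSubplane_subplane h, F.isFull_subplane h, l_mem_subplane⟩
  · rintro ⟨hP, hF, hlL⟩
    have hm := two_le_of_hasOrder h hl
    obtain ⟨q, hqP, hqs, hqD, hql⟩ := Set.nonempty_of_ncard_ne_zero
      (by rw [hF.ncard_inter_punctured hl hP hlL h hs]; omega)
    exact ⟨q, ⟨hqs, hqD, hql⟩, (hF.eq_subplane hP hlL ⟨hl, hs, hqs, hqD, hql⟩ hqP).symm⟩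

/-- The fibre over `π` is the trace of `π` on the punctured line. -/
theorem ncard_sep_subplane_eq (h : R.HasOrder m n) (hl : ¬R.Incid R.D l) (hs : R.Incid R.D s)
    {π : Set Point × Set Line} (hP : R.IsSubplane π.1 π.2) (hF : R.IsFull π.1 π.2)
    (hlL : l ∈ π.2) :
    {q ∈ R.punctured s l | R.subplane l s q = π}.ncard = m - 1 := by
  rw [← hF.ncard_inter_punctured hl hP hlL h hs]
  congr 1
  ext q
  constructor
  · rintro ⟨⟨hqs, hqD, hql⟩, rfl⟩
    exact ⟨q_mem_subplanePoints, hqs, hqD, hql⟩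
  · rintro ⟨hqP, hqs, hqD, hql⟩
    exact ⟨⟨hqs, hqD, hql⟩, (hF.eq_subplane hP hlL ⟨hl, hs, hqs, hqD, hql⟩ hqP).symm⟩

end ProjRect

/-- In a finite projective rectangle of order (m,n), each ordinary line lies in
exactly (n-1)/(m-1) full subplanes; in particular m-1 divides n-1. -/
theorem stmt_15 {Point Line : Type} (R : ProjRect Point Line) (m n : ℕ)
    (h : R.HasOrder m n) (l : Line) (hl : ¬R.Incid R.D l) :
    (m - 1) ∣ (n - 1) ∧
    Set.ncard {π : Set Point × Set Line |
      R.IsSubplane π.1 π.2 ∧ R.IsFull π.1 π.2 ∧ l ∈ π.2} = (n - 1) / (m - 1) := by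
  obtain ⟨s, hs⟩ := R.exists_special
  have hcount := Set.ncard_eq_ncard_image_mul (f := (R.subplane l s ·))
    (ProjRect.finite_punctured h hs) fun π hπ => by
      rw [ProjRect.image_subplane h hl hs] at hπ
      exact ProjRect.ncard_sep_subplane_eq h hl hs hπ.1 hπ.2.1 hπ.2.2
  rw [ProjRect.image_subplane h hl hs, ProjRect.ncard_punctured h hl hs] at hcount
  have hm := ProjRect.two_le_of_hasOrder h hl
  refine ⟨⟨_, hcount.trans (mul_comm _ _)⟩, ?_⟩
  rw [hcount, Nat.mul_div_cancel _ (by omega)]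
end

section
/- For a nontrivial finite projective rectangle of order (m,n) (i.e., one that is not a projective plane), there is an integer τ ≥ 1 such that n = m + τ m(m-1); in particular n ≥ m^2. -/
/-! Fix distinct points `a, b ≠ D` and a special line `s` through neither of them. On the points
of `s` other than `D` and off `ab`, the relation "`ax` meets `by`" is an equivalence by the
restricted Pasch axiom (A6), and projecting from `b` onto `s` identifies the class of `x` with the
points of the ordinary line `ax` other than `a` and off `bD`. With `a, b` on a special line this
splits `n` points into classes of size `m`; with `a, b` on an ordinary line it splits `n - 1`
points into classes of size `m - 1`. Hence `m (m - 1) ∣ n - m`. Finally `n > m` when two lines are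
disjoint: projecting one of them from a point of the other onto a special line is injective and
misses two points of that special line. -/

theorem Set.dvd_ncard_of_equivalence {α : Type*} {T : Set α} (hT : T.Finite)
    {r : α → α → Prop} {k : ℕ} (refl : ∀ x ∈ T, r x x)
    (symm : ∀ x ∈ T, ∀ y ∈ T, r x y → r y x)
    (trans : ∀ x ∈ T, ∀ y ∈ T, ∀ z ∈ T, r x y → r y z → r x z)
    (hk : ∀ x ∈ T, {y ∈ T | r x y}.ncard = k) : k ∣ T.ncard := by
  classical
  obtain ⟨F, rfl⟩ := hT.exists_finset_coe
  set cls : α → Finset α := fun x => F.filter (r x)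
  have hcls : ∀ x ∈ F, (cls x).card = k := fun x hx => by
    rw [← hk x hx, ← Set.ncard_coe_finset, Finset.coe_filter]; rfl
  have hfiber : ∀ x ∈ F, F.filter (fun y => cls y = cls x) = cls x := fun x hx => by
    ext y
    simp only [cls, Finset.mem_filter]
    refine ⟨fun ⟨hy, hxy⟩ => ⟨hy, ?_⟩, fun ⟨hy, hxy⟩ => ⟨hy, ?_⟩⟩
    · have : y ∈ F.filter (r y) := Finset.mem_filter.2 ⟨hy, refl y hy⟩
      exact (Finset.mem_filter.1 (hxy ▸ this)).2
    · ext z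
      simp only [Finset.mem_filter]
      exact and_congr_right fun hz =>
        ⟨trans x hx y hy z hz hxy, trans y hy x hx z hz (symm x hx y hy hxy)⟩
  rw [Set.ncard_coe_finset, Finset.card_eq_sum_card_image cls F,
    Finset.sum_const_nat fun c hc => ?_]
  · exact Dvd.intro_left _ rfl
  obtain ⟨x, hx, rfl⟩ := Finset.mem_image.1 hc
  rw [hfiber x hx, hcls x hx]

theorem Nat.exists_eq_add_mul_mul_sub_one {m n : ℕ} (hm : m ∣ n) (hm' : m - 1 ∣ n - 1)
    (hmn : m < n) : ∃ τ, 1 ≤ τ ∧ n = m + τ * m * (m - 1) ∧ m ^ 2 ≤ n := by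
  obtain ⟨k, rfl⟩ : ∃ k, m = k + 1 := Nat.exists_eq_add_one.2 <| Nat.pos_of_ne_zero
    fun h => by subst h; simp_all
  have hd : (k + 1) * k ∣ n - (k + 1) :=
    (Nat.coprime_self_add_left.2 (Nat.coprime_one_left k)).mul_dvd_of_dvd_of_dvd
      (Nat.dvd_sub hm dvd_rfl)
      (by
        rw [show n - (k + 1) = n - 1 - k by omega]
        exact Nat.dvd_sub (by simpa using hm') dvd_rfl)
  obtain ⟨τ, hτ⟩ := hd
  have hτ₁ : 1 ≤ τ := Nat.pos_of_ne_zero fun h => by simp [h] at hτ; omega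
  have hn : n = k + 1 + τ * (k + 1) * k := by
    have : τ * (k + 1) * k = n - (k + 1) := by rw [hτ]; ring
    omega
  refine ⟨τ, hτ₁, by rwa [Nat.add_sub_cancel], ?_⟩
  rw [hn]
  nlinarith [Nat.mul_le_mul_left ((k + 1) * k) hτ₁]

namespace ProjRect

theorem nonempty_line {Point Line : Type} (R : ProjRect Point Line) : Nonempty Line := by
  obtain ⟨a, b, -, -, hab, -⟩ := R.A2
  exact ⟨(R.A1 a b hab).exists.choose⟩

variable {Point Line : Type} (R : ProjRect Point Line) {p q x y z a b : Point} {l l' s : Line}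

theorem eq_of_incid_of_incid (hl : l ≠ l') (hp : R.Incid p l) (hp' : R.Incid p l')
    (hq : R.Incid q l) (hq' : R.Incid q l') : p = q := by
  by_contra hpq
  exact hl ((R.A1 p q hpq).unique ⟨hp, hq⟩ ⟨hp', hq'⟩)

/-- The line through `p` and `q`; a junk line when `p = q`. -/
noncomputable def line (p q : Point) : Line :=
  haveI := R.nonempty_line
  Classical.epsilon fun l => R.Incid p l ∧ R.Incid q l

theorem incid_line (h : p ≠ q) : R.Incid p (R.line p q) ∧ R.Incid q (R.line p q) :=
  haveI := R.nonempty_line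
  Classical.epsilon_spec (R.A1 p q h).exists

theorem incid_line_left (h : p ≠ q) : R.Incid p (R.line p q) := (R.incid_line h).1

theorem incid_line_right (h : p ≠ q) : R.Incid q (R.line p q) := (R.incid_line h).2

theorem line_eq (h : p ≠ q) (hp : R.Incid p l) (hq : R.Incid q l) : R.line p q = l :=
  (R.A1 p q h).unique (R.incid_line h) ⟨hp, hq⟩

theorem line_ne_of_not_incid_left (hpq : p ≠ q) (hp : ¬R.Incid p l) : R.line p q ≠ l :=
  fun h => hp (h ▸ R.incid_line_left hpq)

theorem line_ne_of_not_incid_right (hpq : p ≠ q) (hq : ¬R.Incid q l) : R.line p q ≠ l :=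
  fun h => hq (h ▸ R.incid_line_right hpq)

theorem line_comm (h : p ≠ q) : R.line p q = R.line q p :=
  R.line_eq h (R.incid_line_right h.symm) (R.incid_line_left h.symm)

theorem not_incid_line_swap (hpq : p ≠ q) (hpx : p ≠ x) (h : ¬R.Incid x (R.line p q)) :
    ¬R.Incid q (R.line p x) := fun hq =>
  h (R.line_eq hpq (R.incid_line_left hpx) hq ▸ R.incid_line_right hpx)

theorem not_incid_D_line (hs : R.Incid R.D s) (ha : ¬R.Incid a s) (hx : R.Incid x s)
    (hxD : x ≠ R.D) : ¬R.Incid R.D (R.line a x) := fun hD =>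
  have hax : a ≠ x := fun h => ha (h ▸ hx)
  ha ((R.A1 x R.D hxD).unique ⟨R.incid_line_right hax, hD⟩ ⟨hx, hs⟩ ▸
    R.incid_line_left hax)

theorem exists_incid_special_of_ne (hs : R.Incid R.D s) (hl : l ≠ s) :
    ∃ p, R.Incid p s ∧ R.Incid p l :=
  (R.A5 s l hs hl).exists

theorem not_incid_D_of_disjoint (hl : l ≠ l') (hdisj : ∀ p, ¬(R.Incid p l ∧ R.Incid p l')) :
    ¬R.Incid R.D l := fun hD =>
  have ⟨p, hp⟩ := R.exists_incid_special_of_ne hD hl.symm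
  hdisj p hp

theorem exists_pair_incid_ne_D (l : Line) :
    ∃ a b, R.Incid a l ∧ R.Incid b l ∧ a ≠ b ∧ a ≠ R.D ∧ b ≠ R.D := by
  obtain ⟨p, q, r, hpq, hpr, hqr, hp, hq, hr⟩ := R.A3 l
  rcases eq_or_ne p R.D with rfl | hpD
  · exact ⟨q, r, hq, hr, hqr, hpq.symm, hpr.symm⟩
  rcases eq_or_ne q R.D with rfl | hqD
  · exact ⟨p, r, hp, hr, hpr, hpD, hqr.symm⟩
  · exact ⟨p, q, hp, hq, hpq, hpD, hqD⟩

/-- The point `ax ∩ s`; junk unless `s` is special, `a ∉ s` and `x ≠ a`. -/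
noncomputable def proj (a : Point) (s : Line) (x : Point) : Point :=
  haveI : Nonempty Point := ⟨R.D⟩
  Classical.epsilon fun p => R.Incid p s ∧ R.Incid p (R.line a x)

def Linked (a b x y : Point) : Prop := ∃ u, R.Incid u (R.line a x) ∧ R.Incid u (R.line b y)

def offPoints (a b : Point) (s : Line) : Set Point :=
  {x | R.Incid x s ∧ x ≠ R.D ∧ ¬R.Incid x (R.line a b)}

variable {R}

theorem proj_spec (hs : R.Incid R.D s) (ha : ¬R.Incid a s) (hax : a ≠ x) :
    R.Incid (R.proj a s x) s ∧ R.Incid (R.proj a s x) (R.line a x) :=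
  haveI : Nonempty Point := ⟨R.D⟩
  Classical.epsilon_spec <| R.exists_incid_special_of_ne hs (R.line_ne_of_not_incid_left hax ha)

theorem proj_eq (hs : R.Incid R.D s) (ha : ¬R.Incid a s) (hax : a ≠ x) (hy : R.Incid y s)
    (hy' : R.Incid y (R.line a x)) : R.proj a s x = y :=
  R.eq_of_incid_of_incid (R.line_ne_of_not_incid_left hax ha).symm (proj_spec hs ha hax).1
    (proj_spec hs ha hax).2 hy hy'

theorem incid_of_incid_proj (hs : R.Incid R.D s) (ha : ¬R.Incid a s) (hax : a ≠ x)
    (hal : R.Incid a l) (h : R.Incid (R.proj a s x) l) : R.Incid x l := by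
  have ⟨hps, hpx⟩ := proj_spec hs ha hax
  have hap : a ≠ R.proj a s x := fun h => ha (h ▸ hps)
  rw [← R.line_eq hap hal h, R.line_eq hap (R.incid_line_left hax) hpx]
  exact R.incid_line_right hax

theorem proj_injOn (hs : R.Incid R.D s) (ha : ¬R.Incid a s) (hal : ¬R.Incid a l) :
    Set.InjOn (R.proj a s) {p | R.Incid p l} := by
  intro p hp q hq hpq
  have hap : a ≠ p := fun h => hal (h ▸ hp)
  have haq : a ≠ q := fun h => hal (h ▸ hq)
  have hq' : R.Incid q (R.line a p) :=
    incid_of_incid_proj hs ha haq (R.incid_line_left hap) (hpq ▸ (proj_spec hs ha hap).2)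
  exact R.eq_of_incid_of_incid (R.line_ne_of_not_incid_left hap hal) (R.incid_line_right hap)
    hp hq' hq

theorem ncard_ordinary_eq_ncard_special (hl : ¬R.Incid R.D l) :
    {p | R.Incid p l}.ncard = {s | R.Incid R.D s}.ncard := by
  have hpD : ∀ p ∈ {p | R.Incid p l}, p ≠ R.D := fun p hp h => hl (h ▸ hp)
  have hbij : Set.BijOn (fun p => R.line p R.D) {p | R.Incid p l} {s | R.Incid R.D s} := by
    refine ⟨fun p hp => R.incid_line_right (hpD p hp), fun p hp q hq hpq => ?_, fun s hs => ?_⟩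
    · have hq' : R.Incid q (R.line p R.D) := by
        rw [show R.line p R.D = R.line q R.D from hpq]; exact R.incid_line_left (hpD q hq)
      exact R.eq_of_incid_of_incid (R.line_ne_of_not_incid_right (hpD p hp) hl)
        (R.incid_line_left (hpD p hp)) hp hq' hq
    · obtain ⟨p, hps, hpl⟩ := R.exists_incid_special_of_ne hs fun h : l = s => hl (h ▸ hs)
      exact ⟨p, hpl, R.line_eq (hpD p hpl) hps hs⟩
  rw [← hbij.image_eq, hbij.injOn.ncard_image]

theorem ncard_incid_and_not_incid [Finite Point] (hl : l ≠ l') (hp : R.Incid p l)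
    (hp' : R.Incid p l') :
    {q | R.Incid q l ∧ ¬R.Incid q l'}.ncard = {q | R.Incid q l}.ncard - 1 := by
  have : {q | R.Incid q l ∧ ¬R.Incid q l'} = {q | R.Incid q l} \ {p} := by
    ext q
    exact and_congr_right fun hq => ⟨fun hq' h => hq' (h ▸ hp'), fun hqp hq' =>
      hqp (R.eq_of_incid_of_incid hl hq hq' hp hp')⟩
  rw [this, Set.ncard_sdiff_singleton_of_mem (s := {q | R.Incid q l}) hp]

theorem offPoints_comm (hab : a ≠ b) : R.offPoints a b s = R.offPoints b a s := by
  rw [offPoints, offPoints, R.line_comm hab]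

theorem ne_of_mem_offPoints (has : ¬R.Incid a s) (hx : x ∈ R.offPoints a b s) : a ≠ x :=
  fun h => has (h ▸ hx.1)

theorem not_incid_line_of_mem_offPoints (hab : a ≠ b) (has : ¬R.Incid a s)
    (hx : x ∈ R.offPoints a b s) : ¬R.Incid b (R.line a x) :=
  R.not_incid_line_swap hab (ne_of_mem_offPoints has hx) hx.2.2

theorem not_incid_D_line_of_mem_offPoints (hs : R.Incid R.D s) (has : ¬R.Incid a s)
    (hx : x ∈ R.offPoints a b s) : ¬R.Incid R.D (R.line a x) :=
  R.not_incid_D_line hs has hx.1 hx.2.1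

theorem linked_refl (has : ¬R.Incid a s) (hbs : ¬R.Incid b s) (hx : x ∈ R.offPoints a b s) :
    R.Linked a b x x :=
  ⟨x, R.incid_line_right (ne_of_mem_offPoints has hx),
    R.incid_line_right fun h => hbs (h ▸ hx.1)⟩

theorem Linked.symm (hab : a ≠ b) (hs : R.Incid R.D s) (has : ¬R.Incid a s)
    (hbs : ¬R.Incid b s) (hx : x ∈ R.offPoints a b s) (hy : y ∈ R.offPoints a b s)
    (h : R.Linked a b x y) : R.Linked a b y x := by
  rcases eq_or_ne x y with rfl | hxy
  · exact h
  obtain ⟨u, hux, huy⟩ := h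
  have hx' : x ∈ R.offPoints b a s := offPoints_comm hab ▸ hx
  have hy' : y ∈ R.offPoints b a s := offPoints_comm hab ▸ hy
  have hax := ne_of_mem_offPoints has hx
  have hay := ne_of_mem_offPoints has hy
  have hbx := ne_of_mem_offPoints hbs hx'
  have hby := ne_of_mem_offPoints hbs hy'
  -- Pasch for the intersecting lines `ax`, `by` and the transversals `ay`, `bx`
  exact R.A6 (R.line a x) (R.line b y) (R.line a y) (R.line b x) u a x y b
    (not_incid_D_line_of_mem_offPoints hs has hx) (not_incid_D_line_of_mem_offPoints hs hbs hy')
    (R.line_ne_of_not_incid_left hax (not_incid_line_of_mem_offPoints hab.symm hbs hy'))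
    hux huy
    (R.line_ne_of_not_incid_left hay (not_incid_line_of_mem_offPoints hab.symm hbs hx'))
    (R.incid_line_left hax) (R.incid_line_left hay) (R.incid_line_right hax)
    (R.incid_line_right hbx) (R.incid_line_right hby) (R.incid_line_right hay)
    (R.incid_line_left hby) (R.incid_line_left hbx) hax hay hab hxy hbx.symm hby.symm

theorem Linked.trans (hab : a ≠ b) (hs : R.Incid R.D s) (has : ¬R.Incid a s)
    (hbs : ¬R.Incid b s) (hx : x ∈ R.offPoints a b s) (hy : y ∈ R.offPoints a b s)
    (hz : z ∈ R.offPoints a b s) (h₁ : R.Linked a b x y) (h₂ : R.Linked a b y z) :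
    R.Linked a b x z := by
  rcases eq_or_ne x y with rfl | hxy
  · exact h₂
  obtain ⟨u, hux, huy⟩ := h₁
  obtain ⟨v, hvy, hvz⟩ := h₂
  have hy' : y ∈ R.offPoints b a s := offPoints_comm hab ▸ hy
  have hz' : z ∈ R.offPoints b a s := offPoints_comm hab ▸ hz
  have hax := ne_of_mem_offPoints has hx
  have hay := ne_of_mem_offPoints has hy
  have hby := ne_of_mem_offPoints hbs hy'
  have hbz := ne_of_mem_offPoints hbs hz'
  have hbax := not_incid_line_of_mem_offPoints hab has hx
  have hbay := not_incid_line_of_mem_offPoints hab has hy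
  have haby := not_incid_line_of_mem_offPoints hab.symm hbs hy'
  have habz := not_incid_line_of_mem_offPoints hab.symm hbs hz'
  have hua : u ≠ a := fun h => haby (h ▸ huy)
  have huv : u ≠ v := by
    rintro rfl
    have hxy' : R.line a x ≠ R.line a y := fun h =>
      hxy (R.eq_of_incid_of_incid (R.line_ne_of_not_incid_left hax has)
        (R.incid_line_right hax) hx.1 (h ▸ R.incid_line_right hay) hy.1)
    exact hua (R.eq_of_incid_of_incid hxy' hux hvy (R.incid_line_left hax) (R.incid_line_left hay))
  -- Pasch for the intersecting lines `by`, `ay` and the transversals `ax`, `bz`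
  exact R.A6 (R.line b y) (R.line a y) (R.line a x) (R.line b z) y u b a v
    (not_incid_D_line_of_mem_offPoints hs hbs hy') (not_incid_D_line_of_mem_offPoints hs has hy)
    (R.line_ne_of_not_incid_left hby hbay) (R.incid_line_right hby) (R.incid_line_right hay)
    (R.line_ne_of_not_incid_left hax habz) huy hux (R.incid_line_left hby)
    (R.incid_line_left hbz) (R.incid_line_left hay) (R.incid_line_left hax) hvy hvz
    (fun h => hbax (h ▸ hux)) hua huv hab.symm (fun h => hbay (h ▸ hvy))
    (fun h => habz (h ▸ hvz))

theorem setOf_linked_eq_image (hab : a ≠ b) (hs : R.Incid R.D s) (has : ¬R.Incid a s)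
    (hbs : ¬R.Incid b s) (hx : x ∈ R.offPoints a b s) :
    {y ∈ R.offPoints a b s | R.Linked a b x y} =
      R.proj b s '' {u | R.Incid u (R.line a x) ∧ u ≠ a ∧ ¬R.Incid u (R.line b R.D)} := by
  have hax := ne_of_mem_offPoints has hx
  have hbax := not_incid_line_of_mem_offPoints hab has hx
  have hbD : b ≠ R.D := fun h => hbs (h ▸ hs)
  ext y
  constructor
  · rintro ⟨hy, u, hux, huy⟩
    have hy' : y ∈ R.offPoints b a s := offPoints_comm hab ▸ hy
    have hbu : b ≠ u := fun h => hbax (h ▸ hux)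
    have hby := ne_of_mem_offPoints hbs hy'
    have hbuy : R.line b u = R.line b y := R.line_eq hbu (R.incid_line_left hby) huy
    refine ⟨u, ⟨hux, fun h => not_incid_line_of_mem_offPoints hab.symm hbs hy' (h ▸ huy),
      fun h => not_incid_D_line_of_mem_offPoints hs hbs hy' ?_⟩, ?_⟩
    · rw [← hbuy, R.line_eq hbu (R.incid_line_left hbD) h]
      exact R.incid_line_right hbD
    · exact proj_eq hs hbs hbu hy.1 (hbuy ▸ R.incid_line_right hby)
  · rintro ⟨u, ⟨hux, hua, hubD⟩, rfl⟩
    have hbu : b ≠ u := fun h => hbax (h ▸ hux)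
    have ⟨hps, hpu⟩ := proj_spec hs hbs hbu
    have hbp : b ≠ R.proj b s u := fun h => hbs (h ▸ hps)
    refine ⟨⟨hps, fun h => hubD ?_, fun h => hua ?_⟩, u, hux, ?_⟩
    · refine incid_of_incid_proj hs hbs hbu (R.incid_line_left hbD) ?_
      rw [h]
      exact R.incid_line_right hbD
    · have hu := incid_of_incid_proj hs hbs hbu (R.incid_line_right hab) h
      have hxab : R.line a x ≠ R.line a b := fun h => hx.2.2 (h ▸ R.incid_line_right hax)
      exact R.eq_of_incid_of_incid hxab hux hu (R.incid_line_left hax) (R.incid_line_left hab)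
    · rw [R.line_eq hbp (R.incid_line_left hbu) hpu]
      exact R.incid_line_right hbu

theorem dvd_ncard_offPoints [Finite Point] (hab : a ≠ b) (hs : R.Incid R.D s)
    (has : ¬R.Incid a s) (hbs : ¬R.Incid b s) {k : ℕ}
    (hk : ∀ x ∈ R.offPoints a b s,
      {u | R.Incid u (R.line a x) ∧ u ≠ a ∧ ¬R.Incid u (R.line b R.D)}.ncard = k) :
    k ∣ (R.offPoints a b s).ncard :=
  Set.dvd_ncard_of_equivalence (Set.toFinite _) (fun _ hx => linked_refl has hbs hx)
    (fun _ hx _ hy => Linked.symm hab hs has hbs hx hy)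
    (fun _ hx _ hy _ hz => Linked.trans hab hs has hbs hx hy hz) fun x hx => by
      rw [setOf_linked_eq_image hab hs has hbs hx, ((proj_injOn hs hbs
        (not_incid_line_of_mem_offPoints hab has hx)).mono fun _ hu => hu.1).ncard_image, hk x hx]

end ProjRect

namespace ProjRect.HasOrder

variable {Point Line : Type} {R : ProjRect Point Line} {m n : ℕ} {l s : Line}

theorem finite_point (h : R.HasOrder m n) : Finite Point := by
  have hS : {s | R.Incid R.D s}.Finite := Set.finite_of_ncard_pos (by rw [h.1]; omega)
  have hpts : ∀ s ∈ {s | R.Incid R.D s}, {p | R.Incid p s}.Finite := fun s hs =>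
    Set.finite_of_ncard_pos (by rw [h.2 s hs]; omega)
  refine Set.finite_univ_iff.1 (((hS.biUnion hpts).insert R.D).subset fun p _ => ?_)
  rcases eq_or_ne p R.D with rfl | hpD
  · exact Set.mem_insert _ _
  · exact Set.mem_insert_of_mem _
      (Set.mem_biUnion (R.incid_line_right hpD) (R.incid_line_left hpD))

theorem ncard_ordinary (h : R.HasOrder m n) (hl : ¬R.Incid R.D l) :
    {p | R.Incid p l}.ncard = m + 1 :=
  (ncard_ordinary_eq_ncard_special hl).trans h.1

theorem ncard_ordinary_diff_special (h : R.HasOrder m n) (hl : ¬R.Incid R.D l)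
    (hs : R.Incid R.D s) : {p | R.Incid p l ∧ ¬R.Incid p s}.ncard = m := by
  have := h.finite_point
  have hls : l ≠ s := fun h => hl (h ▸ hs)
  obtain ⟨p, hps, hpl⟩ := R.exists_incid_special_of_ne hs hls
  rw [ncard_incid_and_not_incid hls hpl hps, h.ncard_ordinary hl, Nat.add_sub_cancel]

theorem ncard_special_diff (h : R.HasOrder m n) (hs : R.Incid R.D s) (hl : l ≠ s) :
    {p | R.Incid p s ∧ ¬R.Incid p l}.ncard = n := by
  have := h.finite_point
  obtain ⟨p, hps, hpl⟩ := R.exists_incid_special_of_ne hs hl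
  rw [ncard_incid_and_not_incid hl.symm hps hpl, h.2 s hs, Nat.add_sub_cancel]

theorem ncard_special_diff_diff_D (h : R.HasOrder m n) (hs : R.Incid R.D s)
    (hl : ¬R.Incid R.D l) : ({p | R.Incid p s ∧ ¬R.Incid p l} \ {R.D}).ncard = n - 1 := by
  have := h.finite_point
  have hD : R.D ∈ {p | R.Incid p s ∧ ¬R.Incid p l} := ⟨hs, hl⟩
  rw [Set.ncard_sdiff_singleton_of_mem hD, h.ncard_special_diff hs fun h : l = s => hl (h ▸ hs)]

theorem two_le (h : R.HasOrder m n) (hl : ¬R.Incid R.D l) : 2 ≤ m := by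
  have := h.finite_point
  obtain ⟨p, q, r, hpq, hpr, hqr, hp, hq, hr⟩ := R.A3 l
  have := (Set.two_lt_ncard (s := {p | R.Incid p l})).2 ⟨p, hp, q, hq, r, hr, hpq, hpr, hqr⟩
  rw [h.ncard_ordinary hl] at this
  omega

theorem dvd (h : R.HasOrder m n) (hm : 1 ≤ m) : m ∣ n := by
  have := h.finite_point
  obtain ⟨s₀, hs₀, s₁, hs₁, hs₀₁⟩ := (Set.one_lt_ncard (Set.finite_of_ncard_pos
    (by rw [h.1]; omega))).1 (by rw [h.1]; omega : 1 < {s | R.Incid R.D s}.ncard)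
  obtain ⟨a, b, ha, hb, hab, haD, hbD⟩ := R.exists_pair_incid_ne_D s₀
  have has₁ : ¬R.Incid a s₁ := fun h => haD (R.eq_of_incid_of_incid hs₀₁ ha h hs₀ hs₁)
  have hbs₁ : ¬R.Incid b s₁ := fun h => hbD (R.eq_of_incid_of_incid hs₀₁ hb h hs₀ hs₁)
  have hab₀ : R.line a b = s₀ := R.line_eq hab ha hb
  have hbD₀ : R.line b R.D = s₀ := R.line_eq hbD hb hs₀
  have hT : R.offPoints a b s₁ = {x | R.Incid x s₁ ∧ ¬R.Incid x s₀} := by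
    ext x
    simp only [offPoints, hab₀]
    exact ⟨fun ⟨h₁, _, h₃⟩ => ⟨h₁, h₃⟩,
      fun ⟨h₁, h₃⟩ => ⟨h₁, fun h => h₃ (h ▸ hs₀), h₃⟩⟩
  have hk : ∀ x ∈ R.offPoints a b s₁,
      {u | R.Incid u (R.line a x) ∧ u ≠ a ∧ ¬R.Incid u (R.line b R.D)}.ncard = m := by
    intro x hx
    have hsx : {u | R.Incid u (R.line a x) ∧ u ≠ a ∧ ¬R.Incid u (R.line b R.D)} =
        {u | R.Incid u (R.line a x) ∧ ¬R.Incid u s₀} := by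
      ext u
      simp only [hbD₀]
      exact ⟨fun ⟨h₁, _, h₃⟩ => ⟨h₁, h₃⟩,
        fun ⟨h₁, h₃⟩ => ⟨h₁, fun h => h₃ (h ▸ ha), h₃⟩⟩
    rw [hsx, h.ncard_ordinary_diff_special (R.not_incid_D_line hs₁ has₁ hx.1 hx.2.1) hs₀]
  rw [← h.ncard_special_diff hs₁ hs₀₁, ← hT]
  exact dvd_ncard_offPoints hab hs₁ has₁ hbs₁ hk

theorem sub_one_dvd_sub_one (h : R.HasOrder m n) (hl : ¬R.Incid R.D l) : m - 1 ∣ n - 1 := by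
  have := h.finite_point
  obtain ⟨a, b, ha, hb, hab, haD, hbD⟩ := R.exists_pair_incid_ne_D l
  have hab₀ : R.line a b = l := R.line_eq hab ha hb
  have habD : ¬R.Incid a (R.line b R.D) := fun h => hl <| by
    rw [← hab₀, R.line_eq hab h (R.incid_line_left hbD)]
    exact R.incid_line_right hbD
  have hpair : ({R.line a R.D, R.line b R.D} : Set Line).ncard < {s | R.Incid R.D s}.ncard := by
    have := h.two_le hl
    rw [h.1]
    exact (Set.ncard_insert_le _ _).trans_lt (by rw [Set.ncard_singleton]; omega)
  obtain ⟨s, hs, hsab⟩ := Set.exists_mem_notMem_of_ncard_lt_ncard hpair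
  simp only [Set.mem_insert_iff, Set.mem_singleton_iff, not_or] at hsab
  have has : ¬R.Incid a s := fun h => hsab.1 (R.line_eq haD h hs).symm
  have hbs : ¬R.Incid b s := fun h => hsab.2 (R.line_eq hbD h hs).symm
  have hT : R.offPoints a b s = {x | R.Incid x s ∧ ¬R.Incid x l} \ {R.D} := by
    ext x
    simp only [offPoints, hab₀, Set.mem_sdiff, Set.mem_singleton_iff, Set.mem_ofPred_eq]
    tauto
  have hk : ∀ x ∈ R.offPoints a b s,
      {u | R.Incid u (R.line a x) ∧ u ≠ a ∧ ¬R.Incid u (R.line b R.D)}.ncard = m - 1 := by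
    intro x hx
    have hsx : {u | R.Incid u (R.line a x) ∧ u ≠ a ∧ ¬R.Incid u (R.line b R.D)} =
        {u | R.Incid u (R.line a x) ∧ ¬R.Incid u (R.line b R.D)} \ {a} := by
      ext u
      simp only [Set.mem_sdiff, Set.mem_singleton_iff, Set.mem_ofPred_eq]
      tauto
    have hau : a ∈ {u | R.Incid u (R.line a x) ∧ ¬R.Incid u (R.line b R.D)} :=
      ⟨R.incid_line_left (ne_of_mem_offPoints has hx), habD⟩
    rw [hsx, Set.ncard_sdiff_singleton_of_mem hau,
      h.ncard_ordinary_diff_special (not_incid_D_line_of_mem_offPoints hs has hx)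
        (R.incid_line_right hbD)]
  rw [← h.ncard_special_diff_diff_D hs hl, ← hT]
  exact dvd_ncard_offPoints hab hs has hbs hk

theorem lt_of_disjoint (h : R.HasOrder m n) {l₁ l₂ : Line} (hl : l₁ ≠ l₂)
    (hdisj : ∀ p, ¬(R.Incid p l₁ ∧ R.Incid p l₂)) : m < n := by
  have := h.finite_point
  have hl₁ := R.not_incid_D_of_disjoint hl hdisj
  have hl₂ := R.not_incid_D_of_disjoint hl.symm fun p hp => hdisj p hp.symm
  have hm := h.two_le hl₁
  obtain ⟨a, -, -, -, -, -, ha, -⟩ := R.A3 l₁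
  have haD : a ≠ R.D := fun h => hl₁ (h ▸ ha)
  obtain ⟨s, hs, hsa⟩ := Set.exists_ne_of_one_lt_ncard (by rw [h.1]; omega) (R.line a R.D)
  have has : ¬R.Incid a s := fun h => hsa (R.line_eq haD h hs).symm
  have hal₂ : ¬R.Incid a l₂ := fun h => hdisj a ⟨ha, h⟩
  have hmaps : Set.MapsTo (R.proj a s) {q | R.Incid q l₂ ∧ ¬R.Incid q (R.line a R.D)}
      ({x | R.Incid x s ∧ ¬R.Incid x l₁} \ {R.D}) := by
    rintro q ⟨hq, hqa⟩
    have haq : a ≠ q := fun h => hal₂ (h ▸ hq)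
    refine ⟨⟨(proj_spec hs has haq).1,
      fun h => hdisj q ⟨incid_of_incid_proj hs has haq ha h, hq⟩⟩,
      fun h => hqa (incid_of_incid_proj hs has haq (R.incid_line_left haD) ?_)⟩
    rw [Set.mem_singleton_iff.1 h]
    exact R.incid_line_right haD
  have := calc
    m = {q | R.Incid q l₂ ∧ ¬R.Incid q (R.line a R.D)}.ncard :=
      (h.ncard_ordinary_diff_special hl₂ (R.incid_line_right haD)).symm
    _ = (R.proj a s '' {q | R.Incid q l₂ ∧ ¬R.Incid q (R.line a R.D)}).ncard :=
      (((proj_injOn hs has hal₂).mono fun _ hq => hq.1).ncard_image).symm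
    _ ≤ ({x | R.Incid x s ∧ ¬R.Incid x l₁} \ {R.D}).ncard :=
      Set.ncard_le_ncard hmaps.image_subset
    _ = n - 1 := h.ncard_special_diff_diff_D hs hl₁
  omega

end ProjRect.HasOrder

/-- For a nontrivial finite projective rectangle of order (m,n) there is an integer
τ ≥ 1 with n = m + τ·m·(m-1); in particular n ≥ m². -/
theorem stmt_18 {Point Line : Type} (R : ProjRect Point Line) (m n : ℕ)
    (h : R.HasOrder m n)
    (hnontriv : ∃ l1 l2 : Line, l1 ≠ l2 ∧ ∀ p : Point, ¬(R.Incid p l1 ∧ R.Incid p l2)) :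
    ∃ τ : ℕ, 1 ≤ τ ∧ n = m + τ * m * (m - 1) ∧ m ^ 2 ≤ n := by
  obtain ⟨l₁, l₂, hl, hdisj⟩ := hnontriv
  have hl₁ := R.not_incid_D_of_disjoint hl hdisj
  have hm := h.two_le hl₁
  exact Nat.exists_eq_add_mul_mul_sub_one (h.dvd (by omega)) (h.sub_one_dvd_sub_one hl₁)
    (h.lt_of_disjoint hl hdisj)
end

section
/- Let G be a quasigroup with more than one element and let L_0(G K_3) be the incidence structure with points {a_g, b_g, c_g : g in G} together with D, special lines A = {a_g} ∪ {D}, B = {b_g} ∪ {D}, C = {c_g} ∪ {D}, and ordinary lines {a_g, b_{gh}, c_h} for g, h in G. Then L_0(G K_3) is a projective rectangle (with special point D) if and only if G is isotopic to a commutative group in which every element squares to the identity. -/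
/-- The incidence relation of the structure $L_0(\mathfrak{G}K_3)$ built from a
quasigroup G: points are a_g, b_g, c_g (encoded (g,0),(g,1),(g,2)) and D; special
lines A, B, C (encoded 0,1,2) and ordinary lines {a_g, b_{gh}, c_h} (encoded (g,h)). -/
def QGIncid {G : Type} [Mul G] : (G × Fin 3) ⊕ Unit → (Fin 3 ⊕ G × G) → Prop
  | Sum.inl (_, i), Sum.inl j => i = j
  | Sum.inr _, Sum.inl _ => True
  | Sum.inl (x, i), Sum.inr (g, h) =>
      (i = 0 ∧ x = g) ∨ (i = 1 ∧ x = g * h) ∨ (i = 2 ∧ x = h)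
  | Sum.inr _, Sum.inr _ => False

/-!
An ordinary line of `L₀(GK₃)` is the triple `(g, g h, h)` of its coordinates in the slots
`a, b, c`. Given an isotopy `γ (x y) = α x * β y` onto an elementary abelian 2-group, the weights
`α g, γ (g h), β h` of a line multiply to `1`, so any two of them determine the third, and the
restricted Pasch axiom reduces to `u v = w z → u z = w v` in that group. Conversely, Pasch for the
lines `(a, b)` and `(c, d)` through `b_{ab} = b_{cd}` gives the same swap property
`a b = c d → a d = c b` in `G`. It makes the principal isotope `x ∘ y = (x / e) (e \ y)` an
elementary abelian 2-group with identity `e e`, and `x y = (x e) ∘ (e y)`.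
-/

open Function

section Lines

variable {G : Type*} [Mul G]

def lineCoord (l : G × G) : Fin 3 → G := ![l.1, l.1 * l.2, l.2]

@[simp] lemma lineCoord_zero (l : G × G) : lineCoord l 0 = l.1 := rfl

@[simp] lemma lineCoord_one (l : G × G) : lineCoord l 1 = l.1 * l.2 := rfl

@[simp] lemma lineCoord_two (l : G × G) : lineCoord l 2 = l.2 := rfl

variable (hq : ∀ a : G, Bijective (fun x => a * x) ∧ Bijective (fun x => x * a))
include hq

lemma exists_lineCoord_eq {i j : Fin 3} (hij : i ≠ j) (x y : G) :
    ∃ l, lineCoord l i = x ∧ lineCoord l j = y := by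
  wlog hlt : i < j generalizing i j x y
  · obtain ⟨l, hj, hi⟩ := this hij.symm y x (hij.symm.lt_of_le (not_lt.1 hlt))
    exact ⟨l, hi, hj⟩
  obtain ⟨rfl, rfl⟩ | ⟨rfl, rfl⟩ | ⟨rfl, rfl⟩ :
      (i = 0 ∧ j = 1) ∨ (i = 0 ∧ j = 2) ∨ (i = 1 ∧ j = 2) := by omega
  · obtain ⟨h, rfl⟩ := (hq x).1.2 y
    exact ⟨(x, h), rfl, rfl⟩
  · exact ⟨(x, y), rfl, rfl⟩
  · obtain ⟨g, rfl⟩ := (hq y).2.2 x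
    exact ⟨(g, y), rfl, rfl⟩

lemma line_eq_of_lineCoord_eq {i j : Fin 3} (hij : i ≠ j) {l l' : G × G}
    (hi : lineCoord l i = lineCoord l' i) (hj : lineCoord l j = lineCoord l' j) : l = l' := by
  wlog hlt : i < j generalizing i j
  · exact this hij.symm hj hi (hij.symm.lt_of_le (not_lt.1 hlt))
  obtain ⟨g, h⟩ := l
  obtain ⟨g', h'⟩ := l'
  obtain ⟨rfl, rfl⟩ | ⟨rfl, rfl⟩ | ⟨rfl, rfl⟩ :
      (i = 0 ∧ j = 1) ∨ (i = 0 ∧ j = 2) ∨ (i = 1 ∧ j = 2) := by omega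
  · obtain rfl : g = g' := hi
    exact congrArg (g, ·) ((hq g).1.1 hj)
  · exact Prod.ext hi hj
  · obtain rfl : h = h' := hj
    exact congrArg (·, h) ((hq h).2.1 hi)

end Lines

section Incidence

variable {G : Type} [Mul G]

@[simp] lemma qgIncid_inl_inl (x : G) (i j : Fin 3) :
    QGIncid (Sum.inl (x, i)) (Sum.inl j : Fin 3 ⊕ G × G) ↔ i = j := Iff.rfl

@[simp] lemma qgIncid_inr_inl (u : Unit) (j : Fin 3) :
    QGIncid (Sum.inr u) (Sum.inl j : Fin 3 ⊕ G × G) := trivial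

@[simp] lemma qgIncid_inl_inr (x : G) (i : Fin 3) (l : G × G) :
    QGIncid (Sum.inl (x, i)) (Sum.inr l) ↔ x = lineCoord l i := by
  obtain ⟨g, h⟩ := l
  fin_cases i <;> simp [QGIncid, lineCoord]

@[simp] lemma qgIncid_inr_inr (u : Unit) (l : G × G) :
    ¬QGIncid (Sum.inr u : (G × Fin 3) ⊕ Unit) (Sum.inr l) := id

lemma exists_eq_of_qgIncid_inr {q : (G × Fin 3) ⊕ Unit} {l : G × G}
    (h : QGIncid q (Sum.inr l)) : ∃ i, q = Sum.inl (lineCoord l i, i) := by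
  rcases q with ⟨x, i⟩ | u
  · exact ⟨i, by simp_all⟩
  · exact absurd h (qgIncid_inr_inr u l)

lemma qgIncid_exists_inl (j : Fin 3) (l : Fin 3 ⊕ G × G) :
    ∃ q, QGIncid q (Sum.inl j) ∧ QGIncid q l := by
  rcases l with j' | l
  · exact ⟨Sum.inr (), trivial, trivial⟩
  · exact ⟨Sum.inl (lineCoord l j, j), rfl, by simp⟩

lemma qgIncid_A1 (hq : ∀ a : G, Bijective (fun x => a * x) ∧ Bijective (fun x => x * a))
    (p q : (G × Fin 3) ⊕ Unit) (hpq : p ≠ q) :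
    ∃! l : Fin 3 ⊕ G × G, QGIncid p l ∧ QGIncid q l := by
  rcases p with ⟨x, i⟩ | ⟨⟩ <;> rcases q with ⟨y, j⟩ | ⟨⟩
  · obtain rfl | hij := eq_or_ne i j
    · refine ⟨Sum.inl i, by simp, ?_⟩
      rintro (j | l) ⟨hx, hy⟩ <;> simp_all
    · obtain ⟨l, hx, hy⟩ := exists_lineCoord_eq hq hij x y
      refine ⟨Sum.inr l, by simp [hx, hy], ?_⟩
      rintro (k | l') ⟨hx', hy'⟩
      · simp_all
      · simp only [qgIncid_inl_inr] at hx' hy'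
        exact congrArg Sum.inr
          (line_eq_of_lineCoord_eq hq hij (hx.trans hx') (hy.trans hy')).symm
  · refine ⟨Sum.inl i, by simp, ?_⟩
    rintro (j | l) ⟨hx, hy⟩ <;> simp_all
  · refine ⟨Sum.inl j, by simp, ?_⟩
    rintro (i | l) ⟨hx, hy⟩ <;> simp_all
  · exact absurd rfl hpq

lemma qgIncid_A2 [Nontrivial G] : ∃ a b c d : (G × Fin 3) ⊕ Unit, a ≠ b ∧ a ≠ c ∧ a ≠ d ∧
    b ≠ c ∧ b ≠ d ∧ c ≠ d ∧
    (∀ l : Fin 3 ⊕ G × G, ¬(QGIncid a l ∧ QGIncid b l ∧ QGIncid c l)) ∧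
    (∀ l : Fin 3 ⊕ G × G, ¬(QGIncid a l ∧ QGIncid b l ∧ QGIncid d l)) ∧
    (∀ l : Fin 3 ⊕ G × G, ¬(QGIncid a l ∧ QGIncid c l ∧ QGIncid d l)) ∧
    (∀ l : Fin 3 ⊕ G × G, ¬(QGIncid b l ∧ QGIncid c l ∧ QGIncid d l)) := by
  obtain ⟨g⟩ := (inferInstance : Nonempty G)
  obtain ⟨k, hk⟩ := exists_ne (g * g)
  refine ⟨Sum.inl (g, 0), Sum.inl (k, 1), Sum.inl (g, 2), Sum.inr (), by simp, by simp, by simp,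
    by simp, by simp, by simp, ?_, ?_, ?_, ?_⟩ <;>
    rintro (j | ⟨a, b⟩) <;>
    grind [qgIncid_inl_inl, qgIncid_inl_inr, qgIncid_inr_inl, qgIncid_inr_inr, lineCoord_zero,
      lineCoord_one, lineCoord_two]

lemma qgIncid_A3 [Nontrivial G] (l : Fin 3 ⊕ G × G) : ∃ p q r : (G × Fin 3) ⊕ Unit,
    p ≠ q ∧ p ≠ r ∧ q ≠ r ∧ QGIncid p l ∧ QGIncid q l ∧ QGIncid r l := by
  rcases l with j | l
  · obtain ⟨x, y, hxy⟩ := exists_pair_ne G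
    exact ⟨Sum.inl (x, j), Sum.inl (y, j), Sum.inr (), by simp [hxy], by simp, by simp, by simp⟩
  · exact ⟨Sum.inl (lineCoord l 0, 0), Sum.inl (lineCoord l 1, 1), Sum.inl (lineCoord l 2, 2),
      by simp, by simp, by simp, by simp⟩

lemma qgIncid_A5 (s l : Fin 3 ⊕ G × G) (hs : QGIncid (Sum.inr ()) s) (hls : l ≠ s) :
    ∃! p : (G × Fin 3) ⊕ Unit, QGIncid p s ∧ QGIncid p l := by
  rcases s with j | s
  swap
  · exact absurd hs (qgIncid_inr_inr () s)
  rcases l with j' | l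
  · refine ⟨Sum.inr (), by simp, ?_⟩
    rintro (⟨x, i⟩ | ⟨⟩) ⟨h, h'⟩
    · simp_all
    · rfl
  · refine ⟨Sum.inl (lineCoord l j, j), by simp, ?_⟩
    rintro (⟨x, i⟩ | ⟨⟩) ⟨h, h'⟩ <;> simp_all

end Incidence

section BooleanGroup

variable {H : Type*} [CommGroup H] (hH : ∀ x : H, x * x = 1)
include hH

lemma mul_swap_of_mul_self_eq_one {a b c d : H} (h : a * b = c * d) : a * d = c * b :=
  calc a * d = a * b * (d * b) := by
        rw [mul_assoc, ← mul_assoc b, mul_comm b d, mul_assoc, hH, mul_one]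
    _ = c * b := by rw [h, mul_assoc, ← mul_assoc d, hH, one_mul]

lemma apply_eq_mul_apply_of_ne (w : Fin 3 → H) (hw : w 1 = w 0 * w 2) {i j k : Fin 3}
    (hij : i ≠ j) (hik : i ≠ k) (hjk : j ≠ k) : w i = w j * w k := by
  have h0 : w 0 = w 1 * w 2 := by rw [hw, mul_assoc, hH, mul_one]
  have h2 : w 2 = w 0 * w 1 := by rw [hw, ← mul_assoc, hH, one_mul]
  fin_cases i <;> fin_cases j <;> fin_cases k <;>
    first
      | exact absurd rfl hij | exact absurd rfl hik | exact absurd rfl hjk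
      | exact h0 | exact hw | exact h2
      | exact h0.trans (mul_comm _ _) | exact hw.trans (mul_comm _ _)
      | exact h2.trans (mul_comm _ _)

end BooleanGroup

lemma fin_three_eq_of_ne {i a b c : Fin 3} (hia : i ≠ a) (hib : i ≠ b) (hab : a ≠ b)
    (hic : i ≠ c) (hac : a ≠ c) : c = b := by
  omega

section Pasch

variable {G H : Type*} {α β γ : G → H}

def slotMap (α β γ : G → H) : Fin 3 → G → H := ![α, γ, β]

lemma slotMap_injective (hα : Injective α) (hβ : Injective β) (hγ : Injective γ) (s : Fin 3) :
    Injective (slotMap α β γ s) := by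
  fin_cases s <;> assumption

lemma lineCoord_pasch [Mul G] [CommGroup H] (hH : ∀ x : H, x * x = 1) (hα : Injective α)
    (hβ : Injective β) (hγ : Injective γ) (hhom : ∀ x y, γ (x * y) = α x * β y)
    {l₁ l₂ l₃ l₄ : G × G} {i j k : Fin 3} (hij : i ≠ j) (hik : i ≠ k) (hjk : j ≠ k)
    (h₁₂ : lineCoord l₁ i = lineCoord l₂ i) (h₁₃ : lineCoord l₁ j = lineCoord l₃ j)
    (h₂₃ : lineCoord l₂ k = lineCoord l₃ k) (h₁₄ : lineCoord l₁ k = lineCoord l₄ k)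
    (h₂₄ : lineCoord l₂ j = lineCoord l₄ j) : lineCoord l₃ i = lineCoord l₄ i := by
  let w (l : G × G) (s : Fin 3) : H := slotMap α β γ s (lineCoord l s)
  have hw (l : G × G) : w l i = w l j * w l k :=
    apply_eq_mul_apply_of_ne hH (w l) (hhom l.1 l.2) hij hik hjk
  apply slotMap_injective hα hβ hγ i
  have h : w l₁ i = w l₂ i := by simp only [w, h₁₂]
  calc w l₃ i = w l₁ j * w l₂ k := by simp only [hw, w, h₁₃, h₂₃]
    _ = w l₂ j * w l₁ k := mul_swap_of_mul_self_eq_one hH ((hw l₁).symm.trans (h.trans (hw l₂)))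
    _ = w l₄ i := by simp only [hw, w, h₁₄, h₂₄]

end Pasch

lemma qgIncid_A6 {G : Type} [Mul G]
    (hq : ∀ a : G, Bijective (fun x => a * x) ∧ Bijective (fun x => x * a))
    {H : Type*} [CommGroup H] (hH : ∀ x : H, x * x = 1) {α β γ : G → H} (hα : Injective α)
    (hβ : Injective β) (hγ : Injective γ) (hhom : ∀ x y, γ (x * y) = α x * β y) :
    ∀ l1 l2 l3 l4 : Fin 3 ⊕ G × G, ∀ p p13 p14 p23 p24 : (G × Fin 3) ⊕ Unit,
    ¬QGIncid (Sum.inr ()) l1 → ¬QGIncid (Sum.inr ()) l2 → l1 ≠ l2 →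
    QGIncid p l1 → QGIncid p l2 → l3 ≠ l4 →
    QGIncid p13 l1 → QGIncid p13 l3 → QGIncid p14 l1 → QGIncid p14 l4 →
    QGIncid p23 l2 → QGIncid p23 l3 → QGIncid p24 l2 → QGIncid p24 l4 →
    p13 ≠ p14 → p13 ≠ p23 → p13 ≠ p24 → p14 ≠ p23 → p14 ≠ p24 → p23 ≠ p24 →
    ∃ q, QGIncid q l3 ∧ QGIncid q l4 := by
  intro l1 l2 l3 l4 p p13 p14 p23 p24 hD1 hD2 _ hp1 hp2 _ h13 h31 h14 h41 h23 h32 h24 h42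
    hn1 hn3 _ _ hn4 _
  have join {x y : (G × Fin 3) ⊕ Unit} (hxy : x ≠ y) {l l' : Fin 3 ⊕ G × G}
      (hl : QGIncid x l ∧ QGIncid y l) (hl' : QGIncid x l' ∧ QGIncid y l') : l = l' :=
    (qgIncid_A1 hq x y hxy).unique hl hl'
  -- If `p` is one of the four points, `l3` or `l4` is one of `l1`, `l2`.
  obtain rfl | hp13 := eq_or_ne p p13
  · obtain rfl := join hn3 ⟨hp2, h23⟩ ⟨h31, h32⟩
    exact ⟨p24, h24, h42⟩
  obtain rfl | hp23 := eq_or_ne p p23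
  · obtain rfl := join hn3.symm ⟨hp1, h13⟩ ⟨h32, h31⟩
    exact ⟨p14, h14, h41⟩
  obtain rfl | hp14 := eq_or_ne p p14
  · obtain rfl := join hn4 ⟨hp2, h24⟩ ⟨h41, h42⟩
    exact ⟨p23, h32, h23⟩
  obtain rfl | hp24 := eq_or_ne p p24
  · obtain rfl := join hn4.symm ⟨hp1, h14⟩ ⟨h42, h41⟩
    exact ⟨p13, h31, h13⟩
  rcases l3 with j | m3
  · exact qgIncid_exists_inl j l4
  rcases l4 with j | m4
  · obtain ⟨q, hq4, hq3⟩ := qgIncid_exists_inl j (Sum.inr m3)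
    exact ⟨q, hq3, hq4⟩
  rcases l1 with j | m1
  · exact absurd trivial hD1
  rcases l2 with j | m2
  · exact absurd trivial hD2
  obtain ⟨i, rfl⟩ := exists_eq_of_qgIncid_inr hp1
  obtain ⟨a, rfl⟩ := exists_eq_of_qgIncid_inr h13
  obtain ⟨b, rfl⟩ := exists_eq_of_qgIncid_inr h14
  obtain ⟨c, rfl⟩ := exists_eq_of_qgIncid_inr h23
  obtain ⟨d, rfl⟩ := exists_eq_of_qgIncid_inr h24
  simp only [qgIncid_inl_inr] at hp2 h31 h41 h32 h42
  have slot_ne {x y : G} {l : G × G} {s t : Fin 3} (hx : x = lineCoord l s)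
      (hy : y = lineCoord l t) (h : (Sum.inl (x, s) : (G × Fin 3) ⊕ Unit) ≠ Sum.inl (y, t)) :
      s ≠ t := by
    rintro rfl; exact h (by rw [hx, hy])
  -- Otherwise `p, p13, p14` and `p, p23, p24` fill the three slots, so `p23, p24` sit in the
  -- slots of `p14, p13`.
  have hia := slot_ne rfl rfl hp13
  have hib := slot_ne rfl rfl hp14
  have hab := slot_ne rfl rfl hn1
  have hic := slot_ne hp2 rfl hp23
  have hid := slot_ne hp2 rfl hp24
  have hac := slot_ne h31 h32 hn3
  have hbd := slot_ne h41 h42 hn4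
  obtain rfl := fin_three_eq_of_ne hia hib hab hic hac
  obtain rfl := fin_three_eq_of_ne hib hia hab.symm hid hbd
  have := lineCoord_pasch hH hα hβ hγ hhom hia hib hab hp2 h31 h32 h41 h42
  exact ⟨Sum.inl (lineCoord m3 i, i), by simp, by simp [this]⟩

lemma mul_swap_of_projRect {G : Type} [Mul G]
    (hq : ∀ a : G, Bijective (fun x => a * x) ∧ Bijective (fun x => x * a))
    (R : ProjRect ((G × Fin 3) ⊕ Unit) (Fin 3 ⊕ G × G)) (hI : R.Incid = QGIncid)
    (hD : R.D = Sum.inr ()) {a b c d : G} (h : a * b = c * d) : a * d = c * b := by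
  obtain rfl | hac := eq_or_ne a c
  · rw [(hq a).1.1 h]
  have hbd : b ≠ d := by rintro rfl; exact hac ((hq b).2.1 h)
  obtain ⟨q, hq₃, hq₄⟩ : ∃ q, QGIncid q (Sum.inr (a, d)) ∧ QGIncid q (Sum.inr (c, b)) := by
    simpa [hI, hD, h, hac, hbd] using
      R.A6 (Sum.inr (a, b)) (Sum.inr (c, d)) (Sum.inr (a, d)) (Sum.inr (c, b))
        (Sum.inl (a * b, 1)) (Sum.inl (a, 0)) (Sum.inl (b, 2)) (Sum.inl (d, 2)) (Sum.inl (c, 0))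
  obtain ⟨s, rfl⟩ := exists_eq_of_qgIncid_inr hq₃
  rw [qgIncid_inl_inr] at hq₄
  fin_cases s
  · exact absurd hq₄ hac
  · exact hq₄
  · exact absurd hq₄.symm hbd

section SwapLoop

variable {L : Type*} (m : L → L → L) (u : L) (hr : ∀ x, m x u = x)
  (hS : ∀ a b c d, m a b = m c d → m a d = m c b)
include hr hS

lemma swapLoop_mul_right_cancel (a b : L) : m (m a b) b = a := by
  simpa [hr] using (hS a b (m a b) u (hr _).symm).symm

variable (hl : ∀ y, m u y = y)
include hl

lemma swapLoop_self (a : L) : m a a = u := by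
  simpa [hr] using hS a u u a (by rw [hr, hl])

lemma swapLoop_comm (a b : L) : m a b = m b a := by
  have h : m u a = m (m a b) b := by rw [hl, swapLoop_mul_right_cancel m u hr hS]
  have h' : m (m a b) a = m b u := by simpa [hl, hr] using (hS _ _ _ _ h).symm
  simpa [hr] using hS _ _ _ _ h'

lemma swapLoop_assoc (a b c : L) : m (m a b) c = m a (m b c) := by
  have h : m (m a b) a = m (m b c) c := by
    rw [swapLoop_comm m u hr hS hl a b, swapLoop_mul_right_cancel m u hr hS,
      swapLoop_mul_right_cancel m u hr hS]
  rw [hS _ _ _ _ h, swapLoop_comm m u hr hS hl _ a]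

abbrev swapLoopCommGroup : CommGroup L where
  mul := m
  one := u
  inv := id
  mul_assoc := swapLoop_assoc m u hr hS hl
  one_mul := hl
  mul_one := hr
  inv_mul_cancel := swapLoop_self m u hr hS hl
  mul_comm := swapLoop_comm m u hr hS hl

end SwapLoop

section PrincipalIsotope

variable {G : Type*} [Mul G]
  (hq : ∀ a : G, Bijective (fun x => a * x) ∧ Bijective (fun x => x * a)) (e : G)

noncomputable def principalIsotope (x y : G) : G :=
  (Equiv.ofBijective _ (hq e).2).symm x * (Equiv.ofBijective _ (hq e).1).symm y

lemma principalIsotope_mul_mul (x y : G) : principalIsotope hq e (x * e) (e * y) = x * y := by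
  simp [principalIsotope]

lemma principalIsotope_mul_sq (x : G) : principalIsotope hq e x (e * e) = x := by
  simpa [principalIsotope] using Equiv.ofBijective_apply_symm_apply (fun x => x * e) (hq e).2 x

lemma principalIsotope_sq_mul (y : G) : principalIsotope hq e (e * e) y = y := by
  simpa [principalIsotope] using Equiv.ofBijective_apply_symm_apply (fun x => e * x) (hq e).1 y

end PrincipalIsotope

theorem exists_isotope_of_mul_swap {G : Type} [Mul G] [Nonempty G]
    (hq : ∀ a : G, Bijective (fun x => a * x) ∧ Bijective (fun x => x * a))
    (hS : ∀ a b c d : G, a * b = c * d → a * d = c * b) :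
    ∃ (H : Type) (_ : CommGroup H) (α β γ : G → H),
      (∀ x : H, x * x = 1) ∧ Bijective α ∧ Bijective β ∧ Bijective γ ∧
      ∀ x y : G, γ (x * y) = α x * β y := by
  obtain ⟨e⟩ := ‹Nonempty G›
  have hr := principalIsotope_mul_sq hq e
  have hl := principalIsotope_sq_mul hq e
  have hSm : ∀ a b c d, principalIsotope hq e a b = principalIsotope hq e c d →
      principalIsotope hq e a d = principalIsotope hq e c b := fun _ _ _ _ => hS _ _ _ _
  exact ⟨G, swapLoopCommGroup _ _ hr hSm hl, (· * e), (e * ·), id, swapLoop_self _ _ hr hSm hl,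
    (hq e).2, (hq e).1, bijective_id, fun x y => (principalIsotope_mul_mul hq e x y).symm⟩

/-- L_0(G K_3) is a projective rectangle with special point D iff the quasigroup G is
isotopic to a commutative group of exponent 2. -/
theorem stmt_19 {G : Type} [Mul G] [Nontrivial G]
    (hq : ∀ a : G, Function.Bijective (fun x => a * x) ∧
      Function.Bijective (fun x => x * a)) :
    (∃ R : ProjRect ((G × Fin 3) ⊕ Unit) (Fin 3 ⊕ G × G),
        R.Incid = QGIncid ∧ R.D = Sum.inr ()) ↔
    ∃ (H : Type) (_ : CommGroup H) (α β γ : G → H),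
      (∀ x : H, x * x = 1) ∧ Function.Bijective α ∧ Function.Bijective β ∧
      Function.Bijective γ ∧ ∀ x y : G, γ (x * y) = α x * β y := by
  constructor
  · rintro ⟨R, hI, hD⟩
    exact exists_isotope_of_mul_swap hq fun _ _ _ _ => mul_swap_of_projRect hq R hI hD
  · rintro ⟨H, _, α, β, γ, hH, hα, hβ, hγ, hhom⟩
    exact ⟨⟨QGIncid, Sum.inr (), qgIncid_A1 hq, qgIncid_A2, qgIncid_A3, qgIncid_A5,
      qgIncid_A6 hq hH hα.1 hβ.1 hγ.1 hhom⟩, rfl, rfl⟩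
end
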